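/- arXiv:1912.02793 — 12 statements merged into one kernel-verified Lean document; each statement's English description precedes it below -/
import Mathlib

section
/- Let (Ω, ℱ, P) be a probability space, W an integrable real random variable, and q a real number. For every measurable set E ⊆ Ω with P(E) = P(W ≤ q), it holds that E[W·𝟙{W ≤ q}] ≤ E[W·𝟙_E], i.e. the lower-tail event {W ≤ q} minimizes the truncated expectation among all events of the same probability. -/
/-! Pointwise, `𝟙_t f - 𝟙_s f ≥ c (𝟙_t - 𝟙_s)` as soon as `f ≤ c` on `s \ t` and `f ≥ c` on `t \ s`;
integrating, the right-hand side becomes `c (μ t - μ s) = 0` when `s` and `t` have equal measure.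
For the lower tail `s = {W ≤ q}` both conditions hold with `c = q`. -/

open MeasureTheory

lemma Set.indicator_const_sub_indicator_const_le {α : Type*} {s t : Set α} {f : α → ℝ} {c : ℝ}
    (hs : ∀ x ∈ s \ t, f x ≤ c) (ht : ∀ x ∈ t \ s, c ≤ f x) :
    t.indicator (fun _ ↦ c) - s.indicator (fun _ ↦ c) ≤ t.indicator f - s.indicator f := by
  classical
  intro x
  simp only [Pi.sub_apply, Set.indicator_apply]
  split_ifs with hxt hxs hxs
  · simp
  · linarith [ht x ⟨hxt, hxs⟩]
  · linarith [hs x ⟨hxs, hxt⟩]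
  · simp

namespace MeasureTheory

variable {α : Type*} [MeasurableSpace α] {μ : Measure α} {s t : Set α}

lemma integral_indicator_le_of_measure_eq [IsFiniteMeasure μ] {f : α → ℝ} (hf : Integrable f μ)
    (hs : NullMeasurableSet s μ) (ht : NullMeasurableSet t μ) (hμ : μ s = μ t) (c : ℝ)
    (hs_le : ∀ x ∈ s \ t, f x ≤ c) (ht_ge : ∀ x ∈ t \ s, c ≤ f x) :
    ∫ x, s.indicator f x ∂μ ≤ ∫ x, t.indicator f x ∂μ := by
  have hconst : ∀ {u : Set α}, NullMeasurableSet u μ → Integrable (u.indicator fun _ ↦ c) μ :=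
    fun hu ↦ (integrable_const c).indicator₀ hu
  have key := integral_mono ((hconst ht).sub (hconst hs)) ((hf.indicator₀ ht).sub (hf.indicator₀ hs))
    (Set.indicator_const_sub_indicator_const_le hs_le ht_ge)
  simp only [Pi.sub_apply] at key
  rw [integral_sub (hconst ht) (hconst hs), integral_sub (hf.indicator₀ ht) (hf.indicator₀ hs),
    integral_indicator₀ ht, integral_indicator₀ hs, setIntegral_const, setIntegral_const,
    measureReal_def, measureReal_def, hμ, sub_self] at key
  exact sub_nonneg.mp key

end MeasureTheory

/-- Lower-tail extremality: among all events `E` with the same probability as `{W ≤ q}`,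
the event `{W ≤ q}` minimizes the truncated expectation `E[W·𝟙_E]`. -/
theorem lower_tail_minimizes_truncated_expectation
    {Ω : Type*} [MeasurableSpace Ω] (P : Measure Ω) [IsProbabilityMeasure P]
    (W : Ω → ℝ) (hW : Integrable W P) (q : ℝ)
    (E : Set Ω) (hE : MeasurableSet E)
    (hPE : P E = P {ω | W ω ≤ q}) :
    ∫ ω, Set.indicator {ω | W ω ≤ q} W ω ∂P ≤ ∫ ω, Set.indicator E W ω ∂P :=
  integral_indicator_le_of_measure_eq hW (nullMeasurableSet_le hW.aemeasurable aemeasurable_const)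
    hE.nullMeasurableSet hPE.symm q (fun _ h ↦ h.1) (fun _ h ↦ (not_le.mp h.2).le)
end

section
/- Let (Ω, ℱ, P) be a probability space, W an integrable real random variable, and q a real number. For every measurable set E ⊆ Ω with P(E) = P(W > q), it holds that E[W·𝟙{W > q}] ≥ E[W·𝟙_E], i.e. the upper-tail event {W > q} maximizes the truncated expectation among all events of the same probability. -/
/-!
Subtracting the constant `q` changes `∫_E W` and `∫_{W > q} W` by the same amount `q · P(E)`, so
it suffices to compare `∫_E (W - q)` with `∫_{W > q} (W - q)`. The latter is the integral of the
positive part `(W - q)⁺` over the whole space, which dominates the integral of `W - q` over any set.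
-/

open MeasureTheory

namespace MeasureTheory

variable {α : Type*} [MeasurableSpace α] {μ : Measure α} {f : α → ℝ}

theorem integral_max_zero_eq_setIntegral_pos (hf : Integrable f μ) :
    ∫ x, max (f x) 0 ∂μ = ∫ x in {x | 0 < f x}, f x ∂μ := by
  rw [← integral_indicator₀ (nullMeasurableSet_lt aemeasurable_const hf.aemeasurable)]
  congr 1 with x
  by_cases hx : 0 < f x
  · simp [hx, hx.le]
  · simp [hx, not_lt.mp hx]

theorem setIntegral_le_setIntegral_pos (hf : Integrable f μ) (s : Set α) :
    ∫ x in s, f x ∂μ ≤ ∫ x in {x | 0 < f x}, f x ∂μ :=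
  calc ∫ x in s, f x ∂μ
      ≤ ∫ x in s, max (f x) 0 ∂μ :=
        setIntegral_mono hf.integrableOn hf.pos_part.integrableOn fun _ ↦ le_max_left _ _
    _ ≤ ∫ x, max (f x) 0 ∂μ :=
        setIntegral_le_integral hf.pos_part (ae_of_all _ fun _ ↦ le_max_right _ _)
    _ = ∫ x in {x | 0 < f x}, f x ∂μ := integral_max_zero_eq_setIntegral_pos hf

theorem setIntegral_sub_const [IsFiniteMeasure μ] (hf : Integrable f μ) (s : Set α) (q : ℝ) :
    ∫ x in s, (f x - q) ∂μ = ∫ x in s, f x ∂μ - μ.real s * q := by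
  rw [integral_sub hf.integrableOn (integrable_const q), setIntegral_const, smul_eq_mul]

theorem setIntegral_le_setIntegral_superlevel [IsFiniteMeasure μ] (hf : Integrable f μ)
    {s : Set α} (q : ℝ) (hs : μ s = μ {x | q < f x}) :
    ∫ x in s, f x ∂μ ≤ ∫ x in {x | q < f x}, f x ∂μ := by
  have key : ∫ x in s, (f x - q) ∂μ ≤ ∫ x in {x | q < f x}, (f x - q) ∂μ := by
    simpa only [sub_pos] using
      setIntegral_le_setIntegral_pos (f := fun x ↦ f x - q) (hf.sub (integrable_const q)) s
  rw [setIntegral_sub_const hf, setIntegral_sub_const hf, measureReal_def, measureReal_def,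
    hs] at key
  linarith

end MeasureTheory

/-- Upper-tail extremality: among all events `E` with the same probability as `{W > q}`,
the event `{W > q}` maximizes the truncated expectation `E[W·𝟙_E]`. -/
theorem upper_tail_maximizes_truncated_expectation
    {Ω : Type*} [MeasurableSpace Ω] (P : Measure Ω) [IsProbabilityMeasure P]
    (W : Ω → ℝ) (hW : Integrable W P) (q : ℝ)
    (E : Set Ω) (hE : MeasurableSet E)
    (hPE : P E = P {ω | W ω > q}) :
    ∫ ω, Set.indicator {ω | W ω > q} W ω ∂P ≥ ∫ ω, Set.indicator E W ω ∂P := by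
  rw [integral_indicator hE,
    integral_indicator₀ (nullMeasurableSet_lt aemeasurable_const hW.aemeasurable)]
  exact setIntegral_le_setIntegral_superlevel hW q hPE
end

section
/- Let (Ω, ℱ, P) be a probability space, let Z and G be integrable real random variables with Z ≤ G almost surely, let S : Ω → {0, 1} be measurable with P(S = 0) = ε, and let q be a real number with P(G > q) = ε. Then E[(1 − S)·Z] ≤ E[G·𝟙{G > q}]. -/
open MeasureTheory
open scoped ENNReal

/-! Among sets of a given finite measure, the superlevel set `{q < f}` maximises `∫ f`:
trading `A \ {q < f}`, where `f ≤ q`, for the equally large `{q < f} \ A`, where `q < f`, can only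
increase the integral. Applied to `A = {S = 0}` and `f = G`, after bounding `Z` by `G` on `A`,
this is the theorem. -/

lemma setIntegral_le_setIntegral_superlevel {Ω : Type*} [MeasurableSpace Ω] {μ : Measure Ω}
    {f : Ω → ℝ} (hf : Integrable f μ) {A : Set Ω} (hA : NullMeasurableSet A μ) (hμA : μ A ≠ ∞)
    {q : ℝ} (hAq : μ A = μ {ω | q < f ω}) :
    ∫ ω in A, f ω ∂μ ≤ ∫ ω in {ω | q < f ω}, f ω ∂μ := by
  set B := {ω | q < f ω}
  have hB : NullMeasurableSet B μ := nullMeasurableSet_lt aemeasurable_const hf.aemeasurable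
  have hdiff : μ (A \ B) = μ (B \ A) :=
    measure_sdiff_symm hA hB hAq (measure_ne_top_of_subset Set.inter_subset_left hμA)
  have hμAB : μ (A \ B) ≠ ∞ := measure_ne_top_of_subset Set.sdiff_subset hμA
  have hμBA : μ (B \ A) ≠ ∞ := hdiff ▸ hμAB
  have hfq : ∫ ω in A \ B, f ω ∂μ ≤ ∫ ω in B \ A, f ω ∂μ :=
    calc ∫ ω in A \ B, f ω ∂μ
        ≤ ∫ _ in A \ B, q ∂μ :=
          setIntegral_mono_on₀ hf.integrableOn (integrableOn_const hμAB)
            (hA.diff hB) fun _ hω => not_lt.1 hω.2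
      _ = ∫ _ in B \ A, q ∂μ := by simp only [setIntegral_const, measureReal_def, hdiff]
      _ ≤ ∫ ω in B \ A, f ω ∂μ :=
          setIntegral_mono_on₀ (integrableOn_const hμBA) hf.integrableOn
            (hB.diff hA) fun _ hω => hω.1.le
  calc ∫ ω in A, f ω ∂μ
      = ∫ ω in A ∩ B, f ω ∂μ + ∫ ω in A \ B, f ω ∂μ :=
        (integral_inter_add_sdiff₀ hB hf.integrableOn).symm
    _ ≤ ∫ ω in B ∩ A, f ω ∂μ + ∫ ω in B \ A, f ω ∂μ := by
        rw [Set.inter_comm]; exact add_le_add_right hfq _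
    _ = ∫ ω in B, f ω ∂μ := integral_inter_add_sdiff₀ hA hf.integrableOn

lemma one_sub_mul_eq_indicator {Ω : Type*} {S Z : Ω → ℝ} {ω : Ω} (hS : S ω = 0 ∨ S ω = 1) :
    (1 - S ω) * Z ω = Set.indicator {ω | S ω = 0} Z ω := by
  rcases hS with h | h <;> simp [h]

/-- Optimization step for the sharp upper bound in the X-mixture model: if `Z ≤ G` a.s.,
`S` takes values in `{0,1}` with `P(S = 0) = ε`, and `q` satisfies `P(G > q) = ε`, then
`E[(1 − S)·Z] ≤ E[G·𝟙{G > q}]`. -/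
theorem upper_bound_optimization_step
    {Ω : Type*} [MeasurableSpace Ω] (P : Measure Ω) [IsProbabilityMeasure P]
    (Z G : Ω → ℝ) (hZ : Integrable Z P) (hG : Integrable G P)
    (hZG : ∀ᵐ ω ∂P, Z ω ≤ G ω)
    (S : Ω → ℝ) (hS : Measurable S) (hS01 : ∀ ω, S ω = 0 ∨ S ω = 1)
    (ε : ℝ≥0∞) (hSε : P {ω | S ω = 0} = ε)
    (q : ℝ) (hq : P {ω | G ω > q} = ε) :
    ∫ ω, (1 - S ω) * Z ω ∂P ≤ ∫ ω, Set.indicator {ω | G ω > q} G ω ∂P := by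
  have hA : MeasurableSet {ω | S ω = 0} := hS (measurableSet_singleton 0)
  have hB : NullMeasurableSet {ω | G ω > q} P :=
    nullMeasurableSet_lt aemeasurable_const hG.aemeasurable
  simp only [one_sub_mul_eq_indicator (hS01 _), integral_indicator hA, integral_indicator₀ hB]
  calc ∫ ω in {ω | S ω = 0}, Z ω ∂P
      ≤ ∫ ω in {ω | S ω = 0}, G ω ∂P := setIntegral_mono_ae hZ.integrableOn hG.integrableOn hZG
    _ ≤ ∫ ω in {ω | G ω > q}, G ω ∂P :=
        setIntegral_le_setIntegral_superlevel hG hA.nullMeasurableSet (measure_ne_top _ _)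
          (hSε.trans hq.symm)
end

section
/- Let (Ω, ℱ, P) be a probability space and m ⊆ ℱ a sub-σ-algebra. Let A be a bounded real random variable, π a version of the conditional expectation E[A | m], and h a bounded m-measurable real function on Ω. Define g₁ = A·h and g₂ = π·h. Let τ ∈ (0, 1) and let q₁, q₂ be real numbers with P(g₁ ≤ q₁) = τ and P(g₂ ≤ q₂) = τ. Then E[g₁·𝟙{g₁ ≤ q₁}] ≤ E[g₂·𝟙{g₂ ≤ q₂}]. -/
open MeasureTheory
open scoped ENNReal

/-- Expected-shortfall comparison (lower tail): with `g₁ = A·h`, `g₂ = π·h` where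
`π` is a version of `E[A | m]` and `h` is bounded `m`-measurable, and `q₁`, `q₂`
τ-quantiles of `g₁`, `g₂`, we have `E[g₁·𝟙{g₁ ≤ q₁}] ≤ E[g₂·𝟙{g₂ ≤ q₂}]`. -/
theorem expected_shortfall_lower_comparison
    {Ω : Type*} (m : MeasurableSpace Ω) {mΩ : MeasurableSpace Ω} (P : Measure Ω) [IsProbabilityMeasure P]
    (hm : m ≤ mΩ)
    (A : Ω → ℝ) (hA : Measurable A) (CA : ℝ) (hAb : ∀ ω, |A ω| ≤ CA)
    (π : Ω → ℝ) (hπ : π =ᵐ[P] P[A|m])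
    (h : Ω → ℝ) (hh : Measurable[m] h) (Ch : ℝ) (hhb : ∀ ω, |h ω| ≤ Ch)
    (τ : ℝ) (hτ : τ ∈ Set.Ioo (0 : ℝ) 1)
    (q₁ q₂ : ℝ)
    (hq₁ : P {ω | A ω * h ω ≤ q₁} = ENNReal.ofReal τ)
    (hq₂ : P {ω | π ω * h ω ≤ q₂} = ENNReal.ofReal τ) :
    ∫ ω, Set.indicator {ω | A ω * h ω ≤ q₁} (fun ω => A ω * h ω) ω ∂P ≤
      ∫ ω, Set.indicator {ω | π ω * h ω ≤ q₂} (fun ω => π ω * h ω) ω ∂P := by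
  letI : MeasurableSpace Ω := mΩ
  have hhM : Measurable[mΩ] h := fun s hs => hm _ (hh hs)
  have hAM : Measurable[mΩ] A := hA
  have hhsm : StronglyMeasurable[m] h := hh.stronglyMeasurable
  set π' : Ω → ℝ := P[A|m] with hπ'def
  have hπ'sm : StronglyMeasurable[m] π' := stronglyMeasurable_condExp
  set f : Ω → ℝ := fun ω => A ω * h ω with hfdef
  set g : Ω → ℝ := fun ω => π' ω * h ω with hgdef
  set S : Set Ω := {ω | f ω ≤ q₁} with hSdef
  set B : Set Ω := {ω | g ω ≤ q₂} with hBdef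
  have hfm : Measurable[mΩ] f := hAM.mul hhM
  have hgm' : Measurable[m] g := hπ'sm.measurable.mul hh
  have hSm : MeasurableSet[mΩ] S := measurableSet_le hfm measurable_const
  have hBm : MeasurableSet[m] B := measurableSet_le hgm' measurable_const
  have hBM : MeasurableSet[mΩ] B := hm _ hBm
  have hAsm : AEStronglyMeasurable A P := hAM.aestronglyMeasurable
  have hfsm : AEStronglyMeasurable f P := hfm.aestronglyMeasurable
  have hhsm' : AEStronglyMeasurable h P := hhM.aestronglyMeasurable
  have hA_int : Integrable A P := by
    refine Integrable.mono' (integrable_const (μ := P) CA) hAsm ?_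
    exact Filter.Eventually.of_forall fun ω => by simpa [Real.norm_eq_abs] using hAb ω
  have hf_int : Integrable f P := by
    refine Integrable.mono' (integrable_const (μ := P) (CA * Ch)) hfsm ?_
    refine Filter.Eventually.of_forall fun ω => ?_
    have h1 : ‖f ω‖ = |A ω| * |h ω| := by rw [Real.norm_eq_abs, abs_mul]
    rw [h1]
    exact mul_le_mul (hAb ω) (hhb ω) (abs_nonneg _) ((abs_nonneg (A ω)).trans (hAb ω))
  have hhA_int : Integrable (h * A) P := by
    have heq : (h * A) = fun ω => A ω * h ω := by funext ω; simp [mul_comm]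
    rw [heq]; exact hf_int
  -- the `π` set agrees a.e. with `B`
  have hsetae : {ω | π ω * h ω ≤ q₂} =ᵐ[P] B := by
    filter_upwards [hπ] with ω hω
    change (π ω * h ω ≤ q₂) = (π' ω * h ω ≤ q₂)
    rw [hω]
  have hPB : P B = ENNReal.ofReal τ := by rw [← measure_congr hsetae, hq₂]
  -- rewrite RHS integrand
  have hRHS : (fun ω => Set.indicator {ω | π ω * h ω ≤ q₂} (fun ω => π ω * h ω) ω)
      =ᵐ[P] fun ω => Set.indicator B g ω := by
    filter_upwards [hπ] with ω hω
    simp only [Set.indicator_apply, Set.mem_setOf_eq, hBdef, hgdef, hω]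
  rw [integral_congr_ae hRHS, integral_indicator (μ := P) hBM]
  have hLHS : (fun ω => Set.indicator {ω | A ω * h ω ≤ q₁} (fun ω => A ω * h ω) ω)
      = fun ω => Set.indicator S f ω := rfl
  rw [hLHS, integral_indicator (μ := P) hSm]
  -- ∫ over B of g equals ∫ over B of f (tower property)
  have hcond : P[h * A|m] =ᵐ[P] h * P[A|m] :=
    condExp_mul_of_stronglyMeasurable_left hhsm hhA_int hA_int
  have key : ∫ ω in B, g ω ∂P = ∫ ω in B, f ω ∂P := by
    have e1 : ∫ ω in B, (P[h * A|m]) ω ∂P = ∫ ω in B, (h * A) ω ∂P :=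
      setIntegral_condExp hm hhA_int hBm
    have e2 : ∫ ω in B, g ω ∂P = ∫ ω in B, (h * P[A|m]) ω ∂P := by
      refine setIntegral_congr_ae hBM ?_
      exact Filter.Eventually.of_forall fun ω _ => by simp [hgdef, hπ'def, mul_comm]
    have e3 : ∫ ω in B, (h * P[A|m]) ω ∂P = ∫ ω in B, (P[h * A|m]) ω ∂P :=
      setIntegral_congr_ae hBM (hcond.mono fun ω hω _ => hω.symm)
    have e4 : ∫ ω in B, (h * A) ω ∂P = ∫ ω in B, f ω ∂P := by
      refine setIntegral_congr_ae hBM ?_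
      exact Filter.Eventually.of_forall fun ω _ => by simp [hfdef, mul_comm]
    rw [e2, e3, e1, e4]
  rw [key]
  -- now the core inequality ∫_S f ≤ ∫_B f
  have hPS : (P S).toReal = τ := by
    rw [show P S = ENNReal.ofReal τ from hq₁, ENNReal.toReal_ofReal hτ.1.le]
  have hPBr : (P B).toReal = τ := by rw [hPB, ENNReal.toReal_ofReal hτ.1.le]
  set u : Ω → ℝ := S.indicator (fun ω => f ω - q₁) with hudef
  set v : Ω → ℝ := B.indicator (fun ω => f ω - q₁) with hvdef
  have hu_int : Integrable u P := (hf_int.sub (integrable_const q₁)).indicator hSm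
  have hv_int : Integrable v P := (hf_int.sub (integrable_const q₁)).indicator hBM
  have hpt : ∀ ω, u ω - v ω ≤ 0 := by
    intro ω
    have hSmem : ω ∈ S ↔ f ω ≤ q₁ := Iff.rfl
    simp only [hudef, hvdef, Set.indicator_apply]
    by_cases hs : ω ∈ S <;> by_cases hb : ω ∈ B <;> simp only [hs, hb, if_true, if_false]
    · simp
    · have hfq : f ω ≤ q₁ := hSmem.mp hs
      simp only [sub_zero]
      linarith
    · have hfq : ¬ f ω ≤ q₁ := fun hc => hs (hSmem.mpr hc)
      simp only [zero_sub, neg_sub]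
      linarith [not_le.mp hfq]
    · simp
  have hintle : ∫ ω, (u ω - v ω) ∂P ≤ 0 := integral_nonpos hpt
  rw [integral_sub hu_int hv_int] at hintle
  have hu_val : ∫ ω, u ω ∂P = (∫ ω in S, f ω ∂P) - q₁ * τ := by
    rw [hudef, integral_indicator (μ := P) hSm,
      integral_sub hf_int.integrableOn (integrableOn_const (measure_lt_top P S).ne),
      setIntegral_const, measureReal_def, hPS, smul_eq_mul, mul_comm]
  have hv_val : ∫ ω, v ω ∂P = (∫ ω in B, f ω ∂P) - q₁ * τ := by
    rw [hvdef, integral_indicator (μ := P) hBM,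
      integral_sub hf_int.integrableOn (integrableOn_const (measure_lt_top P B).ne),
      setIntegral_const, measureReal_def, hPBr, smul_eq_mul, mul_comm]
  rw [hu_val, hv_val] at hintle
  linarith
end

section
/- Let (Ω, ℱ, P) be a probability space and m ⊆ ℱ a sub-σ-algebra. Let A be a bounded real random variable, π a version of the conditional expectation E[A | m], and h a bounded m-measurable real function on Ω. Define g₁ = A·h and g₂ = π·h. Let τ ∈ (0, 1) and let q₁, q₂ be real numbers with P(g₁ ≤ q₁) = τ and P(g₂ ≤ q₂) = τ. Then E[g₁·𝟙{g₁ > q₁}] ≥ E[g₂·𝟙{g₂ > q₂}]. -/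
open MeasureTheory
open scoped ENNReal

/-- Expected-shortfall comparison (upper tail): with `g₁ = A·h`, `g₂ = π·h` where
`π` is a version of `E[A | m]` and `h` is bounded `m`-measurable, and `q₁`, `q₂`
τ-quantiles of `g₁`, `g₂`, we have `E[g₁·𝟙{g₁ > q₁}] ≥ E[g₂·𝟙{g₂ > q₂}]`. -/
theorem expected_shortfall_upper_comparison
    {Ω : Type*} (m : MeasurableSpace Ω) {mΩ : MeasurableSpace Ω} (P : Measure Ω) [IsProbabilityMeasure P]
    (hm : m ≤ mΩ)
    (A : Ω → ℝ) (hA : Measurable A) (CA : ℝ) (hAb : ∀ ω, |A ω| ≤ CA)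
    (π : Ω → ℝ) (hπ : π =ᵐ[P] P[A|m])
    (h : Ω → ℝ) (hh : Measurable[m] h) (Ch : ℝ) (hhb : ∀ ω, |h ω| ≤ Ch)
    (τ : ℝ) (hτ : τ ∈ Set.Ioo (0 : ℝ) 1)
    (q₁ q₂ : ℝ)
    (hq₁ : P {ω | A ω * h ω ≤ q₁} = ENNReal.ofReal τ)
    (hq₂ : P {ω | π ω * h ω ≤ q₂} = ENNReal.ofReal τ) :
    ∫ ω, Set.indicator {ω | A ω * h ω > q₁} (fun ω => A ω * h ω) ω ∂P ≥
      ∫ ω, Set.indicator {ω | π ω * h ω > q₂} (fun ω => π ω * h ω) ω ∂P := by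
  letI : MeasurableSpace Ω := mΩ
  have hAΩ : Measurable[mΩ] A := fun s hs => hA hs
  have hhΩ : Measurable[mΩ] h := fun s hs => hm _ (hh hs)
  set g : Ω → ℝ := fun ω => A ω * h ω with hg_def
  have hg_meas : Measurable[mΩ] g := hAΩ.mul hhΩ
  set ce : Ω → ℝ := P[A|m] with hce_def
  have hce_sm : StronglyMeasurable[m] ce := stronglyMeasurable_condExp
  -- the good version of the second set
  set B : Set Ω := {ω | ce ω * h ω > q₂} with hB_def
  have hBm : MeasurableSet[m] B :=
    measurableSet_lt (measurable_const) ((hce_sm.measurable.mul hh))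
  have hB : MeasurableSet[mΩ] B := hm _ hBm
  set S : Set Ω := {ω | g ω > q₁} with hS_def
  have hS : MeasurableSet[mΩ] S := measurableSet_lt measurable_const hg_meas
  -- integrability of g
  have hg_int : Integrable g P := by
    refine (integrable_const (CA * Ch)).mono' (hg_meas.aestronglyMeasurable : AEStronglyMeasurable g P) ?_
    refine Filter.Eventually.of_forall fun ω => ?_
    calc ‖g ω‖ = |A ω| * |h ω| := abs_mul _ _
      _ ≤ CA * Ch := mul_le_mul (hAb ω) (hhb ω) (abs_nonneg _) ((abs_nonneg _).trans (hAb ω))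
  -- RHS equals ∫ indicator B (ce * h)
  have hRHS : ∫ ω, Set.indicator {ω | π ω * h ω > q₂} (fun ω => π ω * h ω) ω ∂P
      = ∫ ω, Set.indicator B (fun ω => ce ω * h ω) ω ∂P := by
    refine integral_congr_ae ?_
    filter_upwards [hπ] with ω hω
    simp only [Set.indicator, Set.mem_setOf_eq, hB_def, ← hce_def, hω]
  -- indicator B (ce*h) = (indicator B h) * ce and indicator B (A*h) = (indicator B h) * A
  set φ : Ω → ℝ := B.indicator h with hφ_def
  have hφ_sm : StronglyMeasurable[m] φ := hh.stronglyMeasurable.indicator hBm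
  have hφb : ∀ ω, ‖φ ω‖ ≤ Ch := by
    intro ω
    by_cases hω : ω ∈ B
    · simpa [hφ_def, Set.indicator_of_mem hω] using hhb ω
    · simp only [hφ_def, Set.indicator_of_notMem hω, norm_zero]
      exact (abs_nonneg (h ω)).trans (hhb ω)
  have hφA_int : Integrable (φ * A) P := by
    refine Integrable.bdd_mul ?_ ((hφ_sm.mono hm).aestronglyMeasurable) (Filter.Eventually.of_forall hφb)
    exact (integrable_const CA).mono' (hAΩ.aestronglyMeasurable : AEStronglyMeasurable A P)
      (Filter.Eventually.of_forall fun ω => hAb ω)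
  have hA_int : Integrable A P :=
    (integrable_const CA).mono' (hAΩ.aestronglyMeasurable : AEStronglyMeasurable A P)
      (Filter.Eventually.of_forall fun ω => hAb ω)
  have key : ∫ ω, (φ * A) ω ∂P = ∫ ω, (φ * ce) ω ∂P := by
    have h1 : P[φ * A|m] =ᵐ[P] φ * ce :=
      condExp_mul_of_stronglyMeasurable_left hφ_sm hφA_int hA_int
    rw [← integral_condExp hm (f := φ * A), integral_congr_ae h1]
  have hind1 : ∀ ω, Set.indicator B (fun ω => ce ω * h ω) ω = (φ * ce) ω := by
    intro ω
    by_cases hω : ω ∈ B <;>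
      simp [hφ_def, Set.indicator, hω, mul_comm]
  have hind2 : ∀ ω, Set.indicator B g ω = (φ * A) ω := by
    intro ω
    by_cases hω : ω ∈ B <;>
      simp [hφ_def, hg_def, Set.indicator, hω, mul_comm]
  -- so RHS = ∫ indicator B g
  have hRHS2 : ∫ ω, Set.indicator {ω | π ω * h ω > q₂} (fun ω => π ω * h ω) ω ∂P
      = ∫ ω, Set.indicator B g ω ∂P := by
    rw [hRHS]
    simp_rw [hind1, hind2]
    exact key.symm
  rw [ge_iff_le, hRHS2]
  -- measures of S and B agree
  have hPS : P S = 1 - ENNReal.ofReal τ := by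
    have : Sᶜ = {ω | g ω ≤ q₁} := by
      ext ω; simp [hS_def, not_lt]
    have hc : P Sᶜ = ENNReal.ofReal τ := by rw [this]; exact hq₁
    have := measure_compl hS.compl (measure_ne_top P _)
    rw [compl_compl, hc] at this
    rw [this, measure_univ]
  have hPB : P B = 1 - ENNReal.ofReal τ := by
    have hBc : P Bᶜ = ENNReal.ofReal τ := by
      have hae : {ω | π ω * h ω ≤ q₂} =ᵐ[P] Bᶜ := by
        filter_upwards [hπ] with ω hω
        show (π ω * h ω ≤ q₂) = (ω ∈ Bᶜ)
        have : (ω ∈ Bᶜ) = ¬ (q₂ < ce ω * h ω) := rfl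
        rw [this, hω]
        simp [not_lt]
      rw [← hq₂]; exact (measure_congr hae).symm
    have := measure_compl hB.compl (measure_ne_top P _)
    rw [compl_compl, hBc] at this
    rw [this, measure_univ]
  have hPSB : P S = P B := by rw [hPS, hPB]
  -- key pointwise inequality
  have hpt : ∀ ω, Set.indicator B g ω + (Set.indicator S (fun _ => q₁) ω
      - Set.indicator B (fun _ => q₁) ω) ≤ Set.indicator S g ω := by
    intro ω
    simp only [Set.indicator_apply]
    split_ifs with h1 h2 h2
    · linarith
    · have hle : g ω ≤ q₁ := not_lt.1 h2
      linarith
    · have hlt : q₁ < g ω := h2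
      linarith
    · linarith
  -- integrabilities of indicator functions
  have hint_Bg : Integrable (Set.indicator B g) P := hg_int.indicator hB
  have hint_Sg : Integrable (Set.indicator S g) P := hg_int.indicator hS
  have hint_Sq : Integrable (Set.indicator S (fun _ => q₁)) P :=
    (integrable_const q₁).indicator hS
  have hint_Bq : Integrable (Set.indicator B (fun _ => q₁)) P :=
    (integrable_const q₁).indicator hB
  have hmain : ∫ ω, (Set.indicator B g ω + (Set.indicator S (fun _ => q₁) ω
      - Set.indicator B (fun _ => q₁) ω)) ∂P ≤ ∫ ω, Set.indicator S g ω ∂P :=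
    integral_mono (hint_Bg.add (hint_Sq.sub hint_Bq)) hint_Sg hpt
  have hzero : ∫ ω, (Set.indicator S (fun _ => q₁) ω - Set.indicator B (fun _ => q₁) ω) ∂P = 0 := by
    rw [integral_sub hint_Sq hint_Bq, integral_indicator_const q₁ hS,
      integral_indicator_const q₁ hB, measureReal_def, measureReal_def, hPSB, sub_self]
  have hadd : ∫ ω, (Set.indicator B g ω + (Set.indicator S (fun _ => q₁) ω
      - Set.indicator B (fun _ => q₁) ω)) ∂P
      = ∫ ω, Set.indicator B g ω ∂P + ∫ ω, (Set.indicator S (fun _ => q₁) ω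
        - Set.indicator B (fun _ => q₁) ω) ∂P :=
    integral_add hint_Bg (hint_Sq.sub hint_Bq)
  rw [hadd, hzero, add_zero] at hmain
  exact hmain
end

section
/- Let (Ω, ℱ, P) be a probability space and G an integrable real random variable with P(0 < G < 1) = 1. Let 0 ≤ ε₁ < ε₂ ≤ 1 and let q₁, q₂ be real numbers with P(G ≤ q₁) = ε₁ and P(G ≤ q₂) = ε₂. Then E[G·𝟙{G ≤ q₁}] − ε₁ > E[G·𝟙{G ≤ q₂}] − ε₂; that is, the lower-bound curve ε ↦ E[G·𝟙{G ≤ q_ε}] − ε is strictly decreasing in ε. -/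
open MeasureTheory
open scoped ENNReal

/-!
Since `G < 1` almost surely, the function `1 - G` is a.e. positive, so its integral over a set
strictly increases when the set grows by a set of positive measure. For the nested sublevel sets
`{G ≤ q₁} ⊆ {G ≤ q₂}` of probabilities `ε₁ < ε₂` this integral is `ε - E[G·𝟙{G ≤ q_ε}]`.
-/

section

variable {α : Type*} [MeasurableSpace α] {μ : Measure α} {f : α → ℝ} {s t : Set α}

theorem setIntegral_pos_of_ae_pos (hμ : μ s ≠ 0) (hf : IntegrableOn f s μ)
    (hpos : ∀ᵐ x ∂μ.restrict s, 0 < f x) : 0 < ∫ x in s, f x ∂μ := by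
  rw [integral_pos_iff_support_of_nonneg_ae (hpos.mono fun _ hx => hx.le) hf, pos_iff_ne_zero]
  intro hzero
  have hfalse : ∀ᵐ x ∂μ.restrict s, False := by
    filter_upwards [hpos, measure_eq_zero_iff_ae_notMem.1 hzero] with x hx hx'
    exact hx' hx.ne'
  exact hμ (Measure.restrict_eq_zero.1 (ae_eq_bot.1 (Filter.eventually_false_iff_eq_bot.1 hfalse)))

theorem setIntegral_lt_setIntegral_of_ae_pos (hst : s ⊆ t) (hs : NullMeasurableSet s μ)
    (hμ : μ s < μ t) (hf : IntegrableOn f t μ) (hpos : ∀ᵐ x ∂μ.restrict t, 0 < f x) :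
    ∫ x in s, f x ∂μ < ∫ x in t, f x ∂μ := by
  have hdiff : μ (t \ s) ≠ 0 := fun h => (measure_mono_ae (ae_le_set.2 h)).not_gt hμ
  have hpos_diff : 0 < ∫ x in t \ s, f x ∂μ :=
    setIntegral_pos_of_ae_pos hdiff (hf.mono_set Set.sdiff_subset)
      (ae_restrict_of_ae_restrict_of_subset Set.sdiff_subset hpos)
  rw [setIntegral_sdiff₀ hs hf hst] at hpos_diff
  linarith

theorem setOf_le_subset_setOf_le_of_measure_lt {g : α → ℝ} {a b : ℝ}
    (hμ : μ {x | g x ≤ a} < μ {x | g x ≤ b}) : {x | g x ≤ a} ⊆ {x | g x ≤ b} := by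
  rcases le_total a b with hab | hba
  · exact fun x hx => le_trans hx hab
  · exact absurd (measure_mono fun x hx => le_trans hx hba) hμ.not_ge

end

theorem lower_bound_curve_strict_mono_general
    {Ω : Type*} [MeasurableSpace Ω] (P : Measure Ω) [IsProbabilityMeasure P]
    (G : Ω → ℝ) (hG : Integrable G P)
    (hG01 : P {ω | 0 < G ω ∧ G ω < 1} = 1)
    (ε₁ ε₂ : ℝ) (hε₁ : 0 ≤ ε₁) (hε : ε₁ < ε₂)
    (q₁ q₂ : ℝ)
    (hq₁ : P {ω | G ω ≤ q₁} = ENNReal.ofReal ε₁)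
    (hq₂ : P {ω | G ω ≤ q₂} = ENNReal.ofReal ε₂) :
    (∫ ω, Set.indicator {ω | G ω ≤ q₁} G ω ∂P) - ε₁ >
      (∫ ω, Set.indicator {ω | G ω ≤ q₂} G ω ∂P) - ε₂ := by
  have hsublevel (q : ℝ) : NullMeasurableSet {ω | G ω ≤ q} P :=
    nullMeasurableSet_le hG.aemeasurable aemeasurable_const
  have hcurve (q ε : ℝ) (hε0 : 0 ≤ ε) (hq : P {ω | G ω ≤ q} = ENNReal.ofReal ε) :
      ∫ ω in {ω | G ω ≤ q}, (1 - G ω) ∂P = ε - ∫ ω, Set.indicator {ω | G ω ≤ q} G ω ∂P := by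
    rw [integral_sub (integrable_const 1).integrableOn hG.integrableOn, setIntegral_const,
      integral_indicator₀ (hsublevel q), smul_eq_mul, mul_one, measureReal_def, hq,
      ENNReal.toReal_ofReal hε0]
  have hP : P {ω | G ω ≤ q₁} < P {ω | G ω ≤ q₂} := by
    rw [hq₁, hq₂]
    exact (ENNReal.ofReal_lt_ofReal_iff (hε₁.trans_lt hε)).2 hε
  have hpos : ∀ᵐ ω ∂P, 0 < 1 - G ω :=
    ((ae_iff_measure_eq (hG.aemeasurable.nullMeasurable measurableSet_Ioo)).2
      (hG01.trans measure_univ.symm)).mono fun _ h => sub_pos.2 h.2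
  have hlt := setIntegral_lt_setIntegral_of_ae_pos (f := fun ω => 1 - G ω)
    (setOf_le_subset_setOf_le_of_measure_lt hP) (hsublevel q₁) hP
    ((integrable_const 1).sub hG).integrableOn (ae_restrict_of_ae hpos)
  rw [hcurve q₁ ε₁ hε₁ hq₁, hcurve q₂ ε₂ (hε₁.trans hε.le) hq₂] at hlt
  linarith

/-- Strict monotonicity of the lower-bound curve: for `G` supported in `(0,1)` and
`0 ≤ ε₁ < ε₂ ≤ 1` with corresponding quantiles `q₁`, `q₂`,
`E[G·𝟙{G ≤ q₁}] − ε₁ > E[G·𝟙{G ≤ q₂}] − ε₂`. -/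
theorem lower_bound_curve_strict_mono
    {Ω : Type*} [MeasurableSpace Ω] (P : Measure Ω) [IsProbabilityMeasure P]
    (G : Ω → ℝ) (hG : Integrable G P)
    (hG01 : P {ω | 0 < G ω ∧ G ω < 1} = 1)
    (ε₁ ε₂ : ℝ) (hε₁ : 0 ≤ ε₁) (hε : ε₁ < ε₂) (hε₂ : ε₂ ≤ 1)
    (q₁ q₂ : ℝ)
    (hq₁ : P {ω | G ω ≤ q₁} = ENNReal.ofReal ε₁)
    (hq₂ : P {ω | G ω ≤ q₂} = ENNReal.ofReal ε₂) :
    (∫ ω, Set.indicator {ω | G ω ≤ q₁} G ω ∂P) - ε₁ >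
      (∫ ω, Set.indicator {ω | G ω ≤ q₂} G ω ∂P) - ε₂ :=
  lower_bound_curve_strict_mono_general P G hG hG01 ε₁ ε₂ hε₁ hε q₁ q₂ hq₁ hq₂
end

section
/- Let (Ω, ℱ, P) be a probability space and G an integrable real random variable with P(0 < G < 1) = 1. Let 0 ≤ ε₁ < ε₂ ≤ 1 and let r₁, r₂ be real numbers with P(G > r₁) = ε₁ and P(G > r₂) = ε₂. Then E[G·𝟙{G > r₁}] < E[G·𝟙{G > r₂}]; that is, the upper-bound curve ε ↦ E[G·𝟙{G > q_{1−ε}}] is strictly increasing in ε. -/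
open MeasureTheory
open scoped ENNReal

/-!
Lowering the threshold from `r₁` to `r₂` only adds the event `{r₂ < G ≤ r₁}`, which has
probability `ε₂ - ε₁ > 0`; since `G > 0` almost surely, the integral of `G` over it is positive.
-/

namespace MeasureTheory

variable {α : Type*} [MeasurableSpace α] {μ : Measure α}

theorem integral_pos_of_ae_pos {f : α → ℝ} (hfi : Integrable f μ) (hf : ∀ᵐ x ∂μ, 0 < f x)
    (hμ : μ ≠ 0) : 0 < ∫ x, f x ∂μ := by
  rw [integral_pos_iff_support_of_nonneg_ae (hf.mono fun _ hx ↦ hx.le) hfi]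
  have hsupport : Function.support f =ᵐ[μ] Set.univ :=
    Filter.eventuallyEq_univ.2 (hf.mono fun _ hx ↦ hx.ne')
  rw [measure_congr hsupport]
  exact Measure.measure_univ_pos.2 hμ

theorem setIntegral_lt_setIntegral_of_ae_pos {f : α → ℝ} (hfi : Integrable f μ)
    (hf : ∀ᵐ x ∂μ, 0 < f x) {s t : Set α} (hs : NullMeasurableSet s μ)
    (ht : NullMeasurableSet t μ) (hst : s ⊆ t) (hμst : μ s < μ t) :
    ∫ x in s, f x ∂μ < ∫ x in t, f x ∂μ := by
  have hdiff : μ (t \ s) ≠ 0 :=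
    (tsub_pos_of_lt hμst |>.trans_le le_measure_sdiff).ne'
  have hsplit : ∫ x in t, f x ∂μ = ∫ x in s, f x ∂μ + ∫ x in t \ s, f x ∂μ := by
    rw [← setIntegral_union₀ Set.disjoint_sdiff_right.aedisjoint (ht.diff hs) hfi.integrableOn
      hfi.integrableOn, Set.union_sdiff_cancel hst]
  have hpos : 0 < ∫ x in t \ s, f x ∂μ :=
    integral_pos_of_ae_pos hfi.integrableOn (ae_restrict_of_ae hf)
      (Measure.restrict_eq_zero.not.2 hdiff)
  linarith

theorem setOf_lt_subset_setOf_lt_of_measure_lt {f : α → ℝ} {a b : ℝ}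
    (h : μ {x | a < f x} < μ {x | b < f x}) : {x | a < f x} ⊆ {x | b < f x} := by
  have hba : b ≤ a := by
    by_contra! hab
    exact (measure_mono fun x (hx : b < f x) ↦ hab.trans hx).not_gt h
  exact fun x (hx : a < f x) ↦ hba.trans_lt hx

theorem ae_pos_of_measure_setOf_pos_eq_one [IsProbabilityMeasure μ] {f : α → ℝ}
    (hf : AEMeasurable f μ) {p : α → Prop} (h : μ {x | 0 < f x ∧ p x} = 1) :
    ∀ᵐ x ∂μ, 0 < f x := by
  rw [ae_iff_measure_eq (nullMeasurableSet_lt aemeasurable_const hf), measure_univ]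
  exact le_antisymm prob_le_one (h ▸ measure_mono fun _ hx ↦ hx.1)

end MeasureTheory

theorem upper_bound_curve_strict_mono_general
    {Ω : Type*} [MeasurableSpace Ω] (P : Measure Ω) [IsProbabilityMeasure P]
    (G : Ω → ℝ) (hG : Integrable G P)
    (hG01 : P {ω | 0 < G ω ∧ G ω < 1} = 1)
    (ε₁ ε₂ : ℝ) (hε₁ : 0 ≤ ε₁) (hε : ε₁ < ε₂)
    (r₁ r₂ : ℝ)
    (hr₁ : P {ω | G ω > r₁} = ENNReal.ofReal ε₁)
    (hr₂ : P {ω | G ω > r₂} = ENNReal.ofReal ε₂) :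
    (∫ ω, Set.indicator {ω | G ω > r₁} G ω ∂P) <
      ∫ ω, Set.indicator {ω | G ω > r₂} G ω ∂P := by
  have hsuperlevel (r : ℝ) : NullMeasurableSet {ω | G ω > r} P :=
    nullMeasurableSet_lt aemeasurable_const hG.aemeasurable
  have hlt : P {ω | G ω > r₁} < P {ω | G ω > r₂} := by
    rw [hr₁, hr₂]
    exact (ENNReal.ofReal_lt_ofReal_iff_of_nonneg hε₁).2 hε
  rw [integral_indicator₀ (hsuperlevel r₁), integral_indicator₀ (hsuperlevel r₂)]
  exact setIntegral_lt_setIntegral_of_ae_pos hG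
    (ae_pos_of_measure_setOf_pos_eq_one hG.aemeasurable hG01) (hsuperlevel r₁)
    (hsuperlevel r₂) (setOf_lt_subset_setOf_lt_of_measure_lt hlt) hlt

/-- Strict monotonicity of the upper-bound curve: for `G` supported in `(0,1)` and
`0 ≤ ε₁ < ε₂ ≤ 1` with `P(G > r₁) = ε₁` and `P(G > r₂) = ε₂`,
`E[G·𝟙{G > r₁}] < E[G·𝟙{G > r₂}]`. -/
theorem upper_bound_curve_strict_mono
    {Ω : Type*} [MeasurableSpace Ω] (P : Measure Ω) [IsProbabilityMeasure P]
    (G : Ω → ℝ) (hG : Integrable G P)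
    (hG01 : P {ω | 0 < G ω ∧ G ω < 1} = 1)
    (ε₁ ε₂ : ℝ) (hε₁ : 0 ≤ ε₁) (hε : ε₁ < ε₂) (hε₂ : ε₂ ≤ 1)
    (r₁ r₂ : ℝ)
    (hr₁ : P {ω | G ω > r₁} = ENNReal.ofReal ε₁)
    (hr₂ : P {ω | G ω > r₂} = ENNReal.ofReal ε₂) :
    (∫ ω, Set.indicator {ω | G ω > r₁} G ω ∂P) <
      ∫ ω, Set.indicator {ω | G ω > r₂} G ω ∂P :=
  upper_bound_curve_strict_mono_general P G hG hG01 ε₁ ε₂ hε₁ hε r₁ r₂ hr₁ hr₂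
end

section
/- Let (Ω, ℱ, P) be a probability space, G and Ĝ real random variables, q and q̂ real numbers, and Δ₁, Δ₂ ≥ 0 with |Ĝ − G| ≤ Δ₁ almost surely and |q̂ − q| ≤ Δ₂. Suppose the margin condition holds at q: there exist C > 0 and α > 0 such that P(|G − q| ≤ t) ≤ C·t^α for all t > 0. Then E[ |G − q| · |𝟙{Ĝ > q̂} − 𝟙{G > q}| ] ≤ C·(Δ₁ + Δ₂)^{1+α}. -/
/-!
Wherever the two indicators disagree, `G` and `Ĝ` lie on opposite sides of `q` and `q̂`, which
forces `|G − q| ≤ |Ĝ − G| + |q̂ − q| ≤ Δ₁ + Δ₂`. So the integrand is at most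
`(Δ₁ + Δ₂) · 𝟙{|G − q| ≤ Δ₁ + Δ₂}`, and the margin condition at `t = Δ₁ + Δ₂` bounds the
measure of that event by `C (Δ₁ + Δ₂)^α`.
-/

open MeasureTheory

theorem integral_le_mul_measureReal_of_ae_le_indicator {α : Type*} [MeasurableSpace α]
    {μ : Measure α} [IsFiniteMeasure μ] {f : α → ℝ} {s : Set α} {c : ℝ} (hc : 0 ≤ c)
    (hf : f ≤ᵐ[μ] s.indicator fun _ => c) :
    ∫ x, f x ∂μ ≤ c * μ.real s := by
  by_cases hfi : Integrable f μ
  · -- `s` need not be measurable, so pass to a measurable hull of the same measure.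
    have hs_le : s.indicator (fun _ => c) ≤ (toMeasurable μ s).indicator fun _ => c :=
      Set.indicator_le_indicator_of_subset (subset_toMeasurable μ s) fun _ => hc
    calc ∫ x, f x ∂μ ≤ ∫ x, (toMeasurable μ s).indicator (fun _ => c) x ∂μ :=
          integral_mono_ae hfi ((integrable_const c).indicator (measurableSet_toMeasurable μ s))
            (hf.trans (Filter.Eventually.of_forall hs_le))
      _ = c * μ.real s := by
          rw [integral_indicator_const c (measurableSet_toMeasurable μ s), smul_eq_mul,
            measureReal_def, measure_toMeasurable, mul_comm, measureReal_def]
  · rw [integral_undef hfi]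
    positivity

theorem abs_sub_le_of_not_lt_iff_lt {g g' q q' : ℝ} (h : ¬(q' < g' ↔ q < g)) :
    |g - q| ≤ |g' - g| + |q' - q| := by
  grind [abs_le, le_abs_self, neg_abs_le]

theorem abs_indicator_sub_indicator (p r : Prop) [Decidable p] [Decidable r] :
    |(if p then (1 : ℝ) else 0) - (if r then 1 else 0)| = if (p ↔ r) then 0 else 1 := by
  by_cases hp : p <;> by_cases hr : r <;> simp [hp, hr]

theorem abs_sub_mul_abs_indicator_sub_le_indicator {g g' q q' Δ : ℝ}
    (h : |g' - g| + |q' - q| ≤ Δ) :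
    |g - q| * |(if g' > q' then (1 : ℝ) else 0) - (if g > q then (1 : ℝ) else 0)| ≤
      {x | |x - q| ≤ Δ}.indicator (fun _ => Δ) g := by
  have hΔ : 0 ≤ Δ := (add_nonneg (abs_nonneg _) (abs_nonneg _)).trans h
  rw [abs_indicator_sub_indicator]
  by_cases hiff : g' > q' ↔ g > q
  · rw [if_pos hiff, mul_zero]
    exact Set.indicator_nonneg (fun _ _ => hΔ) g
  · have hmem : |g - q| ≤ Δ := (abs_sub_le_of_not_lt_iff_lt hiff).trans h
    rwa [if_neg hiff, mul_one, Set.indicator_of_mem (s := {x | |x - q| ≤ Δ}) hmem]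

theorem margin_condition_indicator_error_bound_general
    {Ω : Type*} [MeasurableSpace Ω] (P : Measure Ω) [IsProbabilityMeasure P]
    (G Ghat : Ω → ℝ) (q qhat : ℝ)
    (Δ₁ Δ₂ : ℝ) (hΔ₁ : 0 ≤ Δ₁) (hΔ₂ : 0 ≤ Δ₂)
    (hGG : ∀ᵐ ω ∂P, |Ghat ω - G ω| ≤ Δ₁) (hqq : |qhat - q| ≤ Δ₂)
    (C α : ℝ) (hC : 0 < C)
    (hmargin : ∀ t > (0 : ℝ), (P {ω | |G ω - q| ≤ t}).toReal ≤ C * t ^ α) :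
    ∫ ω, |G ω - q| *
        |(if Ghat ω > qhat then (1 : ℝ) else 0) - (if G ω > q then (1 : ℝ) else 0)| ∂P ≤
      C * (Δ₁ + Δ₂) ^ (1 + α) := by
  have hΔ : 0 ≤ Δ₁ + Δ₂ := add_nonneg hΔ₁ hΔ₂
  calc _ ≤ (Δ₁ + Δ₂) * P.real {ω | |G ω - q| ≤ Δ₁ + Δ₂} := by
        refine integral_le_mul_measureReal_of_ae_le_indicator hΔ ?_
        filter_upwards [hGG] with ω hω
        exact abs_sub_mul_abs_indicator_sub_le_indicator (add_le_add hω hqq)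
    _ ≤ C * (Δ₁ + Δ₂) ^ (1 + α) := by
        rcases hΔ.eq_or_lt with hzero | hpos
        · rw [← hzero, zero_mul]
          positivity
        · rw [Real.rpow_add hpos, Real.rpow_one, mul_left_comm]
          exact mul_le_mul_of_nonneg_left (hmargin _ hpos) hpos.le

/-- Under the margin condition at `q` with exponent `α`, if `|Ĝ − G| ≤ Δ₁` a.s. and
`|q̂ − q| ≤ Δ₂`, then `E[|G − q|·|𝟙{Ĝ > q̂} − 𝟙{G > q}|] ≤ C·(Δ₁ + Δ₂)^{1+α}`. -/
theorem margin_condition_indicator_error_bound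
    {Ω : Type*} [MeasurableSpace Ω] (P : Measure Ω) [IsProbabilityMeasure P]
    (G Ghat : Ω → ℝ) (q qhat : ℝ)
    (Δ₁ Δ₂ : ℝ) (hΔ₁ : 0 ≤ Δ₁) (hΔ₂ : 0 ≤ Δ₂)
    (hGG : ∀ᵐ ω ∂P, |Ghat ω - G ω| ≤ Δ₁) (hqq : |qhat - q| ≤ Δ₂)
    (C α : ℝ) (hC : 0 < C) (hα : 0 < α)
    (hmargin : ∀ t > (0 : ℝ), (P {ω | |G ω - q| ≤ t}).toReal ≤ C * t ^ α) :
    ∫ ω, |G ω - q| *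
        |(if Ghat ω > qhat then (1 : ℝ) else 0) - (if G ω > q then (1 : ℝ) else 0)| ∂P ≤
      C * (Δ₁ + Δ₂) ^ (1 + α) :=
  margin_condition_indicator_error_bound_general P G Ghat q qhat Δ₁ Δ₂ hΔ₁ hΔ₂ hGG hqq C α hC
    hmargin
end

section
/- Let (Ω, ℱ, P) be a probability space, let A, S : Ω → {0, 1} and a random variable X be measurable, and let Y₀, Y₁ be integrable real random variables. Set Y = A·Y₁ + (1 − A)·Y₀ and let m be the σ-algebra generated by (X, A, S). Let λ be a version of the conditional expectation E[(1 − A)·Y₁ + A·Y₀ | m]. Then E[(1 − S)·(Y₁ − Y₀)] = E[(1 − S)·(2A − 1)·(Y − λ)]. -/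
/-!
Since `A` is binary, the observed outcome minus the counterfactual one is
`(2A − 1)·(Y₁ − Y₀)` and `(2A − 1)² = 1`, so `(1 − S)·(Y₁ − Y₀)` is `(1 − S)·(2A − 1)` times the
observed minus the counterfactual outcome. The weight `(1 − S)·(2A − 1)` is bounded and
`σ(X, A, S)`-measurable, hence pulling it out of the conditional expectation shows that
replacing the counterfactual outcome by `λ` leaves the integral unchanged.
-/

open MeasureTheory

section Binary

variable {a : ℝ}

lemma norm_le_one_of_eq_zero_or_eq_one (ha : a = 0 ∨ a = 1) : ‖a‖ ≤ 1 := by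
  rcases ha with rfl | rfl <;> norm_num

lemma norm_one_sub_le_one_of_eq_zero_or_eq_one (ha : a = 0 ∨ a = 1) : ‖1 - a‖ ≤ 1 := by
  rcases ha with rfl | rfl <;> norm_num

lemma norm_two_mul_sub_one_of_eq_zero_or_eq_one (ha : a = 0 ∨ a = 1) : ‖2 * a - 1‖ = 1 := by
  rcases ha with rfl | rfl <;> norm_num

lemma two_mul_sub_one_sq_of_eq_zero_or_eq_one (ha : a = 0 ∨ a = 1) : (2 * a - 1) ^ 2 = 1 := by
  rcases ha with rfl | rfl <;> norm_num

end Binary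

theorem integral_mul_sub_condExp_eq_zero {Ω : Type*} {m mΩ : MeasurableSpace Ω} {μ : Measure Ω}
    [IsFiniteMeasure μ] (hm : m ≤ mΩ) {f g : Ω → ℝ} (hf : Integrable f μ)
    (hg : StronglyMeasurable[m] g) {c : ℝ} (hg_bound : ∀ᵐ ω ∂μ, ‖g ω‖ ≤ c) :
    ∫ ω, g ω * (f ω - μ[f|m] ω) ∂μ = 0 := by
  have hgμ : AEStronglyMeasurable g μ := (hg.mono hm).aestronglyMeasurable
  have hgf : Integrable (fun ω => g ω * f ω) μ := hf.bdd_mul hgμ hg_bound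
  have hgcondExp : Integrable (fun ω => g ω * μ[f|m] ω) μ :=
    integrable_condExp.bdd_mul hgμ hg_bound
  have hpull : ∫ ω, g ω * μ[f|m] ω ∂μ = ∫ ω, g ω * f ω ∂μ :=
    calc ∫ ω, g ω * μ[f|m] ω ∂μ = ∫ ω, μ[g * f|m] ω ∂μ :=
          integral_congr_ae (condExp_stronglyMeasurable_mul_of_bound hm hg hf c hg_bound).symm
      _ = ∫ ω, g ω * f ω ∂μ := integral_condExp hm
  simp only [mul_sub]
  rw [integral_sub hgf hgcondExp, hpull, sub_self]

/-- Confounded-part decomposition (Lemma 1): with `Y = A·Y₁ + (1 − A)·Y₀`,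
`m = σ(X, A, S)` and `λ` a version of `E[(1 − A)·Y₁ + A·Y₀ | m]`,
`E[(1 − S)·(Y₁ − Y₀)] = E[(1 − S)·(2A − 1)·(Y − λ)]`. -/
theorem confounded_part_decomposition
    {Ω : Type*} {mΩ : MeasurableSpace Ω} (P : Measure Ω) [IsProbabilityMeasure P]
    (A S X : Ω → ℝ)
    (hA : Measurable A) (hS : Measurable S) (hX : Measurable X)
    (hA01 : ∀ ω, A ω = 0 ∨ A ω = 1) (hS01 : ∀ ω, S ω = 0 ∨ S ω = 1)
    (Y₀ Y₁ : Ω → ℝ) (hY₀ : Integrable Y₀ P) (hY₁ : Integrable Y₁ P)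
    (Y : Ω → ℝ) (hY : ∀ ω, Y ω = A ω * Y₁ ω + (1 - A ω) * Y₀ ω)
    (m : MeasurableSpace Ω)
    (hmdef : m = MeasurableSpace.comap (fun ω => (X ω, A ω, S ω)) inferInstance)
    (lam : Ω → ℝ)
    (hlam : lam =ᵐ[P] P[fun ω => (1 - A ω) * Y₁ ω + A ω * Y₀ ω|m]) :
    ∫ ω, (1 - S ω) * (Y₁ ω - Y₀ ω) ∂P =
      ∫ ω, (1 - S ω) * (2 * A ω - 1) * (Y ω - lam ω) ∂P := by
  set F : Ω → ℝ := fun ω => (1 - A ω) * Y₁ ω + A ω * Y₀ ω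
  have hm : m ≤ mΩ := hmdef ▸ (hX.prodMk (hA.prodMk hS)).comap_le
  have hXASm : Measurable[m] (fun ω => (X ω, A ω, S ω)) := hmdef ▸ comap_measurable _
  have hg : StronglyMeasurable[m] (fun ω => (1 - S ω) * (2 * A ω - 1)) :=
    ((measurable_const.sub (measurable_snd.comp measurable_snd)).mul
      ((measurable_const.mul (measurable_fst.comp measurable_snd)).sub measurable_const)
      |>.comp hXASm).stronglyMeasurable
  have hg_bound : ∀ᵐ ω ∂P, ‖(1 - S ω) * (2 * A ω - 1)‖ ≤ 1 := ae_of_all _ fun ω => by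
    rw [norm_mul, norm_two_mul_sub_one_of_eq_zero_or_eq_one (hA01 ω), mul_one]
    exact norm_one_sub_le_one_of_eq_zero_or_eq_one (hS01 ω)
  have hF : Integrable F P :=
    (hY₁.bdd_mul (hA.const_sub 1).aestronglyMeasurable
        (ae_of_all _ fun ω => norm_one_sub_le_one_of_eq_zero_or_eq_one (hA01 ω))).add
      (hY₀.bdd_mul hA.aestronglyMeasurable
        (ae_of_all _ fun ω => norm_le_one_of_eq_zero_or_eq_one (hA01 ω)))
  have hdiff : Integrable (fun ω => (1 - S ω) * (Y₁ ω - Y₀ ω)) P :=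
    (hY₁.sub hY₀).bdd_mul (hS.const_sub 1).aestronglyMeasurable
      (ae_of_all _ fun ω => norm_one_sub_le_one_of_eq_zero_or_eq_one (hS01 ω))
  have hresid : Integrable (fun ω => (1 - S ω) * (2 * A ω - 1) * (F ω - P[F|m] ω)) P :=
    (hF.sub integrable_condExp).bdd_mul (hg.mono hm).aestronglyMeasurable hg_bound
  have hsplit : (fun ω => (1 - S ω) * (2 * A ω - 1) * (Y ω - lam ω)) =ᵐ[P]
      fun ω => (1 - S ω) * (Y₁ ω - Y₀ ω) + (1 - S ω) * (2 * A ω - 1) * (F ω - P[F|m] ω) := by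
    filter_upwards [hlam] with ω hω
    rw [hY ω, hω]
    linear_combination (1 - S ω) * (Y₁ ω - Y₀ ω) * two_mul_sub_one_sq_of_eq_zero_or_eq_one (hA01 ω)
  rw [integral_congr_ae hsplit, integral_add hdiff hresid,
    integral_mul_sub_condExp_eq_zero hm hF hg hg_bound, add_zero]
end

section
/- Let (Ω, ℱ, P) be a probability space and m ⊆ ℱ a sub-σ-algebra. Let A : Ω → {0, 1} be measurable, Y a bounded real random variable, and t ∈ (0, 1/2]. Let π₁ be a version of E[A | m] with t ≤ π₁ ≤ 1 − t almost surely. Let μ₁, μ₀ be bounded m-measurable functions satisfying E[A·Y | m] = μ₁·π₁ a.s. and E[(1 − A)·Y | m] = μ₀·(1 − π₁) a.s. Define ν = (2A − 1)·(Y − (A·μ₁ + (1 − A)·μ₀)) / (A·π₁ + (1 − A)·(1 − π₁)) + μ₁ − μ₀. Then E[ν | m] = μ₁ − μ₀ almost surely, and in particular E[ν] = E[μ₁ − μ₀]. -/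
open MeasureTheory

/-- The uncentered efficient influence function `ν` of `E[μ₁ − μ₀]` satisfies
`E[ν | m] = μ₁ − μ₀` a.s., and in particular `E[ν] = E[μ₁ − μ₀]`. -/
theorem influence_function_ate_unbiased
    {Ω : Type*} (m : MeasurableSpace Ω) {mΩ : MeasurableSpace Ω} (P : Measure Ω) [IsProbabilityMeasure P]
    (hm : m ≤ mΩ)
    (A : Ω → ℝ) (hA : Measurable A) (hA01 : ∀ ω, A ω = 0 ∨ A ω = 1)
    (Y : Ω → ℝ) (hYmeas : Measurable Y) (CY : ℝ) (hYb : ∀ ω, |Y ω| ≤ CY)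
    (t : ℝ) (ht : t ∈ Set.Ioc (0 : ℝ) (1 / 2))
    (π₁ : Ω → ℝ) (hπ : π₁ =ᵐ[P] P[A|m])
    (hπb : ∀ᵐ ω ∂P, t ≤ π₁ ω ∧ π₁ ω ≤ 1 - t)
    (μ₁ μ₀ : Ω → ℝ) (hμ₁m : Measurable[m] μ₁) (hμ₀m : Measurable[m] μ₀)
    (C₁ C₀ : ℝ) (hμ₁b : ∀ ω, |μ₁ ω| ≤ C₁) (hμ₀b : ∀ ω, |μ₀ ω| ≤ C₀)
    (hreg1 : P[fun ω => A ω * Y ω|m] =ᵐ[P] fun ω => μ₁ ω * π₁ ω)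
    (hreg0 : P[fun ω => (1 - A ω) * Y ω|m] =ᵐ[P] fun ω => μ₀ ω * (1 - π₁ ω))
    (ν : Ω → ℝ)
    (hν : ∀ ω, ν ω =
      (2 * A ω - 1) * (Y ω - (A ω * μ₁ ω + (1 - A ω) * μ₀ ω)) /
        (A ω * π₁ ω + (1 - A ω) * (1 - π₁ ω)) + μ₁ ω - μ₀ ω) :
    (P[ν|m] =ᵐ[P] fun ω => μ₁ ω - μ₀ ω) ∧
      ∫ ω, ν ω ∂P = ∫ ω, (μ₁ ω - μ₀ ω) ∂P := by
  obtain ⟨ht0, ht2⟩ := ht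
  -- abbreviations
  set f : Ω → ℝ := P[A|m] with hfdef
  have hf_sm : StronglyMeasurable[m] f := stronglyMeasurable_condExp
  have hfM : Measurable[m] f := hf_sm.measurable
  have hμ₁ : Measurable[mΩ] μ₁ := (fun s hs => hm _ (hμ₁m hs))
  have hμ₀ : Measurable[mΩ] μ₀ := (fun s hs => hm _ (hμ₀m hs))
  have hfMΩ : Measurable[mΩ] f := (fun s hs => hm _ (hfM hs))
  -- a bounded-ness helper
  have hbdd : ∀ (g : Ω → ℝ) (C : ℝ), Measurable[mΩ] g →
      (∀ᵐ ω ∂P, |g ω| ≤ C) → Integrable g P := by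
    intro g C hgm hgb
    exact Integrable.mono' (integrable_const C) (hgm.aestronglyMeasurable (μ := P))
      (by simpa [Real.norm_eq_abs] using hgb)
  have hA1 : ∀ ω, |A ω| ≤ 1 := by
    intro ω; rcases hA01 ω with h | h <;> simp [h]
  -- a.e. facts
  have hfae : ∀ᵐ ω ∂P, f ω = π₁ ω ∧ t ≤ π₁ ω ∧ π₁ ω ≤ 1 - t := by
    filter_upwards [hπ, hπb] with ω h1 h2
    exact ⟨h1.symm, h2.1, h2.2⟩
  -- the key functions
  set g₁ : Ω → ℝ := fun ω => A ω * Y ω - μ₁ ω * A ω with hg₁def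
  set g₀ : Ω → ℝ := fun ω => (1 - A ω) * Y ω - μ₀ ω * (1 - A ω) with hg₀def
  set c₁ : Ω → ℝ := fun ω => (f ω)⁻¹ with hc₁def
  set c₀ : Ω → ℝ := fun ω => (1 - f ω)⁻¹ with hc₀def
  set ν' : Ω → ℝ := fun ω => c₁ ω * g₁ ω - c₀ ω * g₀ ω + (μ₁ ω - μ₀ ω) with hν'def
  -- measurability
  have mono : ∀ {g : Ω → ℝ}, Measurable[m] g → Measurable[mΩ] g := by
    intro g hg s hs; exact hm _ (hg hs)
  have hg₁M : Measurable[mΩ] g₁ := (hA.mul hYmeas).sub (hμ₁.mul hA)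
  have hg₀M : Measurable[mΩ] g₀ :=
    ((measurable_const.sub hA).mul hYmeas).sub (hμ₀.mul (measurable_const.sub hA))
  have hc₁M : Measurable[m] c₁ := hfM.inv
  have hc₁MΩ : Measurable[mΩ] c₁ := fun s hs => hm _ (hc₁M hs)
  have hc₀M : Measurable[m] c₀ := (measurable_const.sub hfM).inv
  have hc₀MΩ : Measurable[mΩ] c₀ := fun s hs => hm _ (hc₀M hs)
  -- integrability
  have hAY : Integrable (fun ω => A ω * Y ω) P := by
    refine hbdd _ CY (hA.mul hYmeas) (Filter.Eventually.of_forall ?_)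
    intro ω
    calc |A ω * Y ω| = |A ω| * |Y ω| := abs_mul _ _
      _ ≤ 1 * |Y ω| := mul_le_mul_of_nonneg_right (hA1 ω) (abs_nonneg _)
      _ = |Y ω| := one_mul _
      _ ≤ CY := hYb ω
  have hA1Y : Integrable (fun ω => (1 - A ω) * Y ω) P := by
    refine hbdd _ (2 * CY) ((measurable_const.sub hA).mul hYmeas)
      (Filter.Eventually.of_forall ?_)
    intro ω
    have h1 : |1 - A ω| ≤ 2 := by rcases hA01 ω with h | h <;> simp [h] <;> norm_num
    calc |(1 - A ω) * Y ω| = |1 - A ω| * |Y ω| := abs_mul _ _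
      _ ≤ 2 * |Y ω| := mul_le_mul_of_nonneg_right h1 (abs_nonneg _)
      _ ≤ 2 * CY := by nlinarith [hYb ω, abs_nonneg (Y ω)]
  have hμ₁A : Integrable (fun ω => μ₁ ω * A ω) P := by
    refine hbdd _ C₁ (hμ₁.mul hA) (Filter.Eventually.of_forall ?_)
    intro ω
    calc |μ₁ ω * A ω| = |μ₁ ω| * |A ω| := abs_mul _ _
      _ ≤ |μ₁ ω| * 1 := mul_le_mul_of_nonneg_left (hA1 ω) (abs_nonneg _)
      _ ≤ C₁ := by rw [mul_one]; exact hμ₁b ω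
  have hμ₀A : Integrable (fun ω => μ₀ ω * (1 - A ω)) P := by
    refine hbdd _ (C₀ * 2) (hμ₀.mul (measurable_const.sub hA))
      (Filter.Eventually.of_forall ?_)
    intro ω
    have h1 : |1 - A ω| ≤ 2 := by rcases hA01 ω with h | h <;> simp [h] <;> norm_num
    calc |μ₀ ω * (1 - A ω)| = |μ₀ ω| * |1 - A ω| := abs_mul _ _
      _ ≤ C₀ * 2 := mul_le_mul (hμ₀b ω) h1 (abs_nonneg _)
          (le_trans (abs_nonneg _) (hμ₀b ω))
  have hg₁I : Integrable g₁ P := hAY.sub hμ₁A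
  have hg₀I : Integrable g₀ P := hA1Y.sub hμ₀A
  -- a.e. bounds on c₁, c₀
  have hc₁b : ∀ᵐ ω ∂P, |c₁ ω| ≤ t⁻¹ := by
    filter_upwards [hfae] with ω ⟨hfe, htl, htu⟩
    have hft : t ≤ f ω := hfe ▸ htl
    rw [hc₁def, abs_of_nonneg (inv_nonneg.2 (le_trans ht0.le hft))]
    exact inv_anti₀ ht0 hft
  have hc₀b : ∀ᵐ ω ∂P, |c₀ ω| ≤ t⁻¹ := by
    filter_upwards [hfae] with ω ⟨hfe, htl, htu⟩
    have hft : t ≤ 1 - f ω := by rw [hfe]; linarith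
    rw [hc₀def, abs_of_nonneg (inv_nonneg.2 (le_trans ht0.le hft))]
    exact inv_anti₀ ht0 hft
  have hc₁g₁ : Integrable (fun ω => c₁ ω * g₁ ω) P := by
    refine hbdd _ (t⁻¹ * (CY + C₁))
      (hc₁MΩ.mul hg₁M) ?_
    filter_upwards [hc₁b] with ω hc
    have hg : |g₁ ω| ≤ CY + C₁ := by
      rcases hA01 ω with h | h
      · simp only [hg₁def, h, mul_zero, zero_mul, sub_zero]
        have := abs_nonneg (Y ω)
        have := le_trans (abs_nonneg _) (hμ₁b ω)
        have := le_trans (abs_nonneg _) (hYb ω)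
        simp only [abs_zero]
        linarith
      · simp only [hg₁def, h, mul_one, one_mul]
        calc |Y ω - μ₁ ω| ≤ |Y ω| + |μ₁ ω| := abs_sub _ _
          _ ≤ CY + C₁ := add_le_add (hYb ω) (hμ₁b ω)
    calc |c₁ ω * g₁ ω| = |c₁ ω| * |g₁ ω| := abs_mul _ _
      _ ≤ t⁻¹ * (CY + C₁) := mul_le_mul hc hg (abs_nonneg _)
          (inv_nonneg.2 ht0.le)
  have hc₀g₀ : Integrable (fun ω => c₀ ω * g₀ ω) P := by
    refine hbdd _ (t⁻¹ * (CY + C₀))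
      (hc₀MΩ.mul hg₀M) ?_
    filter_upwards [hc₀b] with ω hc
    have hg : |g₀ ω| ≤ CY + C₀ := by
      rcases hA01 ω with h | h
      · simp only [hg₀def, h, sub_zero, mul_one, one_mul]
        calc |Y ω - μ₀ ω| ≤ |Y ω| + |μ₀ ω| := abs_sub _ _
          _ ≤ CY + C₀ := add_le_add (hYb ω) (hμ₀b ω)
      · simp only [hg₀def, h, sub_self, zero_mul, mul_zero, sub_zero, abs_zero]
        have := le_trans (abs_nonneg _) (hμ₀b ω)
        have := le_trans (abs_nonneg _) (hYb ω)
        linarith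
    calc |c₀ ω * g₀ ω| = |c₀ ω| * |g₀ ω| := abs_mul _ _
      _ ≤ t⁻¹ * (CY + C₀) := mul_le_mul hc hg (abs_nonneg _) (inv_nonneg.2 ht0.le)
  have hμ₁I : Integrable μ₁ P :=
    hbdd _ C₁ (mono hμ₁m) (Filter.Eventually.of_forall hμ₁b)
  have hμ₀I : Integrable μ₀ P :=
    hbdd _ C₀ (mono hμ₀m) (Filter.Eventually.of_forall hμ₀b)
  -- conditional expectations of g₁ and g₀ vanish a.e.
  have hEμ₁A : P[fun ω => μ₁ ω * A ω|m] =ᵐ[P] fun ω => μ₁ ω * f ω := by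
    have hAint : Integrable A P :=
      hbdd _ 1 hA (Filter.Eventually.of_forall hA1)
    exact condExp_mul_of_stronglyMeasurable_left hμ₁m.stronglyMeasurable hμ₁A hAint
  have hEμ₀A : P[fun ω => μ₀ ω * (1 - A ω)|m] =ᵐ[P] fun ω => μ₀ ω * (1 - f ω) := by
    have hAint : Integrable (fun ω => 1 - A ω) P := by
      refine hbdd _ 2 (measurable_const.sub hA)
        (Filter.Eventually.of_forall fun ω => ?_)
      rcases hA01 ω with h | h <;> simp [h] <;> norm_num
    have h := condExp_mul_of_stronglyMeasurable_left hμ₀m.stronglyMeasurable hμ₀A hAint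
    refine h.trans ?_
    have h1A : P[fun ω => 1 - A ω|m] =ᵐ[P] fun ω => 1 - f ω := by
      have := condExp_sub (μ := P) (m := m) (integrable_const (1:ℝ))
        (hbdd _ 1 hA (Filter.Eventually.of_forall hA1))
      refine this.trans ?_
      filter_upwards with ω
      simp [condExp_const hm]
      rfl
    filter_upwards [h1A] with ω hω
    simp only [Pi.mul_apply]
    rw [hω]
  have hEg₁ : P[g₁|m] =ᵐ[P] fun _ => (0:ℝ) := by
    have h1 : P[g₁|m] =ᵐ[P] P[fun ω => A ω * Y ω|m] - P[fun ω => μ₁ ω * A ω|m] :=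
      condExp_sub hAY hμ₁A m
    filter_upwards [h1, hreg1, hEμ₁A, hπ] with ω h1 h2 h3 h4
    rw [h1, Pi.sub_apply, h2, h3, h4]
    ring
  have hEg₀ : P[g₀|m] =ᵐ[P] fun _ => (0:ℝ) := by
    have h1 : P[g₀|m] =ᵐ[P] P[fun ω => (1 - A ω) * Y ω|m] - P[fun ω => μ₀ ω * (1 - A ω)|m] :=
      condExp_sub hA1Y hμ₀A m
    filter_upwards [h1, hreg0, hEμ₀A, hπ] with ω h1 h2 h3 h4
    rw [h1, Pi.sub_apply, h2, h3, h4]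
    ring
  have hEc₁g₁ : P[fun ω => c₁ ω * g₁ ω|m] =ᵐ[P] fun _ => (0:ℝ) := by
    have h := condExp_mul_of_stronglyMeasurable_left hc₁M.stronglyMeasurable hc₁g₁ hg₁I
    have he : P[fun ω => c₁ ω * g₁ ω|m] = P[c₁ * g₁|m] := rfl
    rw [he]
    filter_upwards [h, hEg₁] with ω h1 h2
    rw [h1, Pi.mul_apply, h2, mul_zero]
  have hEc₀g₀ : P[fun ω => c₀ ω * g₀ ω|m] =ᵐ[P] fun _ => (0:ℝ) := by
    have h := condExp_mul_of_stronglyMeasurable_left hc₀M.stronglyMeasurable hc₀g₀ hg₀I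
    have he : P[fun ω => c₀ ω * g₀ ω|m] = P[c₀ * g₀|m] := rfl
    rw [he]
    filter_upwards [h, hEg₀] with ω h1 h2
    rw [h1, Pi.mul_apply, h2, mul_zero]
  -- ν equals ν' a.e.
  have hνν' : ν =ᵐ[P] ν' := by
    filter_upwards [hfae] with ω ⟨hfe, htl, htu⟩
    rw [hν ω]
    show _ = c₁ ω * g₁ ω - c₀ ω * g₀ ω + (μ₁ ω - μ₀ ω)
    simp only [hc₁def, hc₀def, hg₁def, hg₀def]
    rw [hfe]
    rcases hA01 ω with h | h
    · have h1 : (1:ℝ) - π₁ ω ≠ 0 := by intro hc; linarith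
      rw [h]
      field_simp
      have h2 : (1 - π₁ ω) * (1 - π₁ ω)⁻¹ = 1 := mul_inv_cancel₀ h1
      linear_combination (-(Y ω - μ₀ ω)) * h2
    · have h1 : π₁ ω ≠ 0 := by intro hc; linarith
      rw [h]
      field_simp
      have h2 : π₁ ω * (π₁ ω)⁻¹ = 1 := mul_inv_cancel₀ h1
      linear_combination (Y ω - μ₁ ω) * h2
  have hν'I : Integrable ν' P := (hc₁g₁.sub hc₀g₀).add (hμ₁I.sub hμ₀I)
  have hνI : Integrable ν P := hν'I.congr hνν'.symm
  -- main conditional expectation identity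
  have hEν' : P[ν'|m] =ᵐ[P] fun ω => μ₁ ω - μ₀ ω := by
    have h1 : P[ν'|m] =ᵐ[P]
        P[fun ω => c₁ ω * g₁ ω - c₀ ω * g₀ ω|m] + P[fun ω => μ₁ ω - μ₀ ω|m] :=
      condExp_add (hc₁g₁.sub hc₀g₀) (hμ₁I.sub hμ₀I) m
    have h2 : P[fun ω => c₁ ω * g₁ ω - c₀ ω * g₀ ω|m] =ᵐ[P]
        P[fun ω => c₁ ω * g₁ ω|m] - P[fun ω => c₀ ω * g₀ ω|m] :=
      condExp_sub hc₁g₁ hc₀g₀ m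
    have h3 : P[fun ω => μ₁ ω - μ₀ ω|m] = fun ω => μ₁ ω - μ₀ ω :=
      condExp_of_stronglyMeasurable hm
        (hμ₁m.stronglyMeasurable.sub hμ₀m.stronglyMeasurable) (hμ₁I.sub hμ₀I)
    filter_upwards [h1, h2, hEc₁g₁, hEc₀g₀] with ω h1 h2 h4 h5
    rw [h1, Pi.add_apply, h2, Pi.sub_apply, h4, h5]
    have h3' := congrFun h3 ω
    simp only [h3']
    ring
  have hEν : P[ν|m] =ᵐ[P] fun ω => μ₁ ω - μ₀ ω :=
    (condExp_congr_ae hνν').trans hEν'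
  refine ⟨hEν, ?_⟩
  calc ∫ ω, ν ω ∂P = ∫ ω, (P[ν|m]) ω ∂P := (integral_condExp hm).symm
    _ = ∫ ω, (μ₁ ω - μ₀ ω) ∂P := integral_congr_ae hEν
end

section
/- Let (Ω, ℱ, P) be a probability space and m ⊆ ℱ a sub-σ-algebra. Let A : Ω → {0, 1} be measurable, Y a bounded real random variable, and t ∈ (0, 1/2]. Let π₁ be a version of E[A | m] with t ≤ π₁ ≤ 1 − t almost surely. Let μ₁, μ₀ be bounded m-measurable functions satisfying E[A·Y | m] = μ₁·π₁ a.s. and E[(1 − A)·Y | m] = μ₀·(1 − π₁) a.s. Define τ = (1 − 2A)·(Y − (A·μ₁ + (1 − A)·μ₀)) · (A·(1 − π₁) + (1 − A)·π₁) / (A·π₁ + (1 − A)·(1 − π₁)) + A·μ₀ + (1 − A)·(1 − μ₁). Then E[τ | m] = (1 − π₁)·(1 − μ₁) + π₁·μ₀ almost surely, and in particular E[τ] = E[(1 − π₁)(1 − μ₁) + π₁·μ₀]. -/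
open MeasureTheory

/-- The uncentered efficient influence function `τ` of `E[g(η)]`, where
`g(η) = (1 − π₁)(1 − μ₁) + π₁·μ₀`, satisfies `E[τ | m] = (1 − π₁)(1 − μ₁) + π₁·μ₀` a.s.,
and in particular `E[τ] = E[(1 − π₁)(1 − μ₁) + π₁·μ₀]`. -/
theorem influence_function_envelope_unbiased
    {Ω : Type*} (m : MeasurableSpace Ω) {mΩ : MeasurableSpace Ω} (P : Measure Ω) [IsProbabilityMeasure P]
    (hm : m ≤ mΩ)
    (A : Ω → ℝ) (hA : Measurable A) (hA01 : ∀ ω, A ω = 0 ∨ A ω = 1)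
    (Y : Ω → ℝ) (hYmeas : Measurable Y) (CY : ℝ) (hYb : ∀ ω, |Y ω| ≤ CY)
    (t : ℝ) (ht : t ∈ Set.Ioc (0 : ℝ) (1 / 2))
    (π₁ : Ω → ℝ) (hπ : π₁ =ᵐ[P] P[A|m])
    (hπb : ∀ᵐ ω ∂P, t ≤ π₁ ω ∧ π₁ ω ≤ 1 - t)
    (μ₁ μ₀ : Ω → ℝ) (hμ₁m : Measurable[m] μ₁) (hμ₀m : Measurable[m] μ₀)
    (C₁ C₀ : ℝ) (hμ₁b : ∀ ω, |μ₁ ω| ≤ C₁) (hμ₀b : ∀ ω, |μ₀ ω| ≤ C₀)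
    (hreg1 : P[fun ω => A ω * Y ω|m] =ᵐ[P] fun ω => μ₁ ω * π₁ ω)
    (hreg0 : P[fun ω => (1 - A ω) * Y ω|m] =ᵐ[P] fun ω => μ₀ ω * (1 - π₁ ω))
    (τf : Ω → ℝ)
    (hτf : ∀ ω, τf ω =
      (1 - 2 * A ω) * (Y ω - (A ω * μ₁ ω + (1 - A ω) * μ₀ ω)) *
          (A ω * (1 - π₁ ω) + (1 - A ω) * π₁ ω) /
          (A ω * π₁ ω + (1 - A ω) * (1 - π₁ ω)) +
        A ω * μ₀ ω + (1 - A ω) * (1 - μ₁ ω)) :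
    (P[τf|m] =ᵐ[P] fun ω => (1 - π₁ ω) * (1 - μ₁ ω) + π₁ ω * μ₀ ω) ∧
      ∫ ω, τf ω ∂P = ∫ ω, ((1 - π₁ ω) * (1 - μ₁ ω) + π₁ ω * μ₀ ω) ∂P := by
  have ht0 : (0 : ℝ) < t := ht.1
  set π : Ω → ℝ := P[A|m] with hπdef
  have hπsm : StronglyMeasurable[m] π := stronglyMeasurable_condExp
  have hπmeas : Measurable[mΩ] π := (hπsm.mono hm).measurable
  have hπb' : ∀ᵐ ω ∂P, t ≤ π ω ∧ π ω ≤ 1 - t := by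
    filter_upwards [hπ, hπb] with ω h1 h2
    rw [← h1]; exact h2
  have hμ₁meas : Measurable[mΩ] μ₁ := hμ₁m.mono hm le_rfl
  have hμ₀meas : Measurable[mΩ] μ₀ := hμ₀m.mono hm le_rfl
  have hA' : Measurable[mΩ] A := hA
  have hY' : Measurable[mΩ] Y := hYmeas
  have hAb : ∀ ω, |A ω| ≤ 1 := by
    intro ω; rcases hA01 ω with h | h <;> simp [h]
  have hne : Nonempty Ω := by
    by_contra h
    rw [not_nonempty_iff] at h
    have h1 : P Set.univ = 1 := measure_univ
    rw [Set.univ_eq_empty_iff.mpr h] at h1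
    simp at h1
  have hCY : 0 ≤ CY := le_trans (abs_nonneg _) (hYb Classical.ofNonempty)
  have hC₁ : 0 ≤ C₁ := le_trans (abs_nonneg _) (hμ₁b Classical.ofNonempty)
  have hC₀ : 0 ≤ C₀ := le_trans (abs_nonneg _) (hμ₀b Classical.ofNonempty)
  have h1t : (0:ℝ) ≤ (1 - t) / t := div_nonneg (by linarith [ht.2]) ht0.le
  -- a helper to prove integrability from a.e. bounds
  have intb : ∀ (f : Ω → ℝ) (C : ℝ), @AEStronglyMeasurable Ω ℝ _ mΩ mΩ f P →
      (∀ᵐ ω ∂P, |f ω| ≤ C) → Integrable f P := by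
    intro f C hf hb
    exact Integrable.mono' (integrable_const C) hf (hb.mono fun ω h => by simpa using h)
  -- the pieces
  set f₁ : Ω → ℝ := fun ω => -((1 - π ω) / π ω) with hf₁def
  set f₀ : Ω → ℝ := fun ω => π ω / (1 - π ω) with hf₀def
  set g₁ : Ω → ℝ := fun ω => A ω * (Y ω - μ₁ ω) with hg₁def
  set g₀ : Ω → ℝ := fun ω => (1 - A ω) * (Y ω - μ₀ ω) with hg₀def
  set h₃ : Ω → ℝ := fun ω => μ₀ ω * A ω + (1 - μ₁ ω) * (1 - A ω) with hh₃def
  have hπm' : Measurable[m] π := hπsm.measurable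
  have hf₁sm : StronglyMeasurable[m] f₁ :=
    (((measurable_const.sub hπm').div hπm').neg).stronglyMeasurable
  have hf₀sm : StronglyMeasurable[m] f₀ :=
    (hπm'.div (measurable_const.sub hπm')).stronglyMeasurable
  have hf₁b : ∀ᵐ ω ∂P, |f₁ ω| ≤ (1 - t) / t := by
    filter_upwards [hπb'] with ω hω
    have h1 : |1 - π ω| ≤ 1 - t := by rw [abs_le]; constructor <;> linarith [hω.1, hω.2]
    have h2 : |π ω| = π ω := abs_of_pos (lt_of_lt_of_le ht0 hω.1)
    rw [hf₁def, abs_neg, abs_div, h2]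
    exact div_le_div₀ (by linarith) h1 ht0 hω.1
  have hf₀b : ∀ᵐ ω ∂P, |f₀ ω| ≤ (1 - t) / t := by
    filter_upwards [hπb'] with ω hω
    have h1 : |π ω| ≤ 1 - t := by rw [abs_le]; constructor <;> linarith [hω.1, hω.2]
    have h2 : |1 - π ω| = 1 - π ω := abs_of_pos (by linarith [hω.2])
    rw [hf₀def, abs_div, h2]
    exact div_le_div₀ (by linarith) h1 ht0 (by linarith [hω.2])
  have hg₁b : ∀ ω, |g₁ ω| ≤ CY + C₁ := by
    intro ω
    rw [hg₁def, abs_mul]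
    have := mul_le_mul (hAb ω) ((abs_sub _ _).trans (add_le_add (hYb ω) (hμ₁b ω)))
      (abs_nonneg (Y ω - μ₁ ω)) zero_le_one
    linarith
  have hg₀b : ∀ ω, |g₀ ω| ≤ 2 * (CY + C₀) := by
    intro ω
    rw [hg₀def, abs_mul]
    have h1 : |1 - A ω| ≤ 2 := by rcases hA01 ω with h | h <;> simp [h] <;> norm_num
    have h2 : |Y ω - μ₀ ω| ≤ CY + C₀ := (abs_sub _ _).trans (add_le_add (hYb ω) (hμ₀b ω))
    exact mul_le_mul h1 h2 (abs_nonneg _) (by norm_num)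
  -- measurabilities
  have hg₁meas : Measurable[mΩ] g₁ := hA'.mul (hY'.sub hμ₁meas)
  have hg₀meas : Measurable[mΩ] g₀ := (measurable_const.sub hA').mul (hY'.sub hμ₀meas)
  have hf₁meas : Measurable[mΩ] f₁ := ((measurable_const.sub hπmeas).div hπmeas).neg
  have hf₀meas : Measurable[mΩ] f₀ := hπmeas.div (measurable_const.sub hπmeas)
  -- integrabilities
  have intg₁ : Integrable g₁ P := intb g₁ (CY + C₁) hg₁meas.aestronglyMeasurable
    (.of_forall hg₁b)
  have intg₀ : Integrable g₀ P := intb g₀ (2 * (CY + C₀)) hg₀meas.aestronglyMeasurable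
    (.of_forall hg₀b)
  have intf₁g₁ : Integrable (f₁ * g₁) P := by
    apply intb _ ((1 - t) / t * (CY + C₁)) ((hf₁meas.mul hg₁meas).aestronglyMeasurable)
    filter_upwards [hf₁b] with ω h
    rw [Pi.mul_apply, abs_mul]
    exact mul_le_mul h (hg₁b ω) (abs_nonneg _) h1t
  have intf₀g₀ : Integrable (f₀ * g₀) P := by
    apply intb _ ((1 - t) / t * (2 * (CY + C₀))) ((hf₀meas.mul hg₀meas).aestronglyMeasurable)
    filter_upwards [hf₀b] with ω h
    rw [Pi.mul_apply, abs_mul]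
    exact mul_le_mul h (hg₀b ω) (abs_nonneg _) h1t
  have intA : Integrable A P := intb A 1 hA'.aestronglyMeasurable (.of_forall hAb)
  have intμ₀A : Integrable (μ₀ * A) P := by
    apply intb _ (C₀ * 1) ((hμ₀meas.mul hA').aestronglyMeasurable)
    refine .of_forall fun ω => ?_
    rw [Pi.mul_apply, abs_mul]
    exact mul_le_mul (hμ₀b ω) (hAb ω) (abs_nonneg _) (le_trans (abs_nonneg _) (hμ₀b ω))
  have int1A : Integrable (fun ω => 1 - A ω) P := (integrable_const 1).sub intA
  have intμ₁1A : Integrable ((fun ω => 1 - μ₁ ω) * fun ω => 1 - A ω) P := by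
    apply intb _ ((1 + C₁) * 2) (((measurable_const.sub hμ₁meas).mul
      (measurable_const.sub hA')).aestronglyMeasurable)
    refine .of_forall fun ω => ?_
    rw [Pi.mul_apply, abs_mul]
    have h1 : |1 - μ₁ ω| ≤ 1 + C₁ := (abs_sub _ _).trans (by simpa using hμ₁b ω)
    have h2 : |1 - A ω| ≤ 2 := by rcases hA01 ω with h | h <;> simp [h] <;> norm_num
    exact mul_le_mul h1 h2 (abs_nonneg _) (by linarith)
  have inth₃ : Integrable h₃ P := intμ₀A.add intμ₁1A
  have intTau : Integrable (f₁ * g₁ + f₀ * g₀ + h₃) P := (intf₁g₁.add intf₀g₀).add inth₃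
  -- τf agrees a.e. with the decomposed form
  have htt : τf =ᵐ[P] f₁ * g₁ + f₀ * g₀ + h₃ := by
    filter_upwards [hπ] with ω hω
    rcases hA01 ω with h | h <;>
      simp only [hτf, hf₁def, hf₀def, hg₁def, hg₀def, hh₃def, Pi.add_apply, Pi.mul_apply,
        h, hω] <;> ring
  have intτf : Integrable τf P := intTau.congr htt.symm
  -- conditional expectations of the pieces
  have hcg₁ : P[g₁|m] =ᵐ[P] 0 := by
    have h1 : P[fun ω => μ₁ ω * A ω|m] =ᵐ[P] fun ω => μ₁ ω * π ω := by
      have := condExp_mul_of_stronglyMeasurable_left hμ₁m.stronglyMeasurable (g := A) ?_ intA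
      · exact this
      · apply intb _ (C₁ * 1) ((hμ₁meas.mul hA').aestronglyMeasurable)
        refine .of_forall fun ω => ?_
        rw [Pi.mul_apply, abs_mul]
        exact mul_le_mul (hμ₁b ω) (hAb ω) (abs_nonneg _) (le_trans (abs_nonneg _) (hμ₁b ω))
    have h2 : P[g₁|m] =ᵐ[P] P[fun ω => A ω * Y ω|m] - P[fun ω => μ₁ ω * A ω|m] := by
      have heq : g₁ = (fun ω => A ω * Y ω) - fun ω => μ₁ ω * A ω := by
        funext ω; simp [hg₁def]; ring
      rw [heq]
      apply condExp_sub
      · exact intb _ CY ((hA'.mul hY').aestronglyMeasurable) (.of_forall fun ω => by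
          rw [abs_mul]
          calc |A ω| * |Y ω| ≤ 1 * CY :=
                mul_le_mul (hAb ω) (hYb ω) (abs_nonneg _) zero_le_one
            _ = CY := one_mul _)
      · apply intb _ (C₁ * 1) ((hμ₁meas.mul hA').aestronglyMeasurable)
        refine .of_forall fun ω => ?_
        rw [Pi.mul_apply, abs_mul]
        exact mul_le_mul (hμ₁b ω) (hAb ω) (abs_nonneg _) (le_trans (abs_nonneg _) (hμ₁b ω))
    filter_upwards [h1, h2, hreg1, hπ] with ω e1 e2 e3 e4
    simp only [Pi.sub_apply, Pi.zero_apply] at *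
    rw [e2, e1, e3, e4]; ring
  have hcg₀ : P[g₀|m] =ᵐ[P] 0 := by
    have h1 : P[fun ω => μ₀ ω * (1 - A ω)|m] =ᵐ[P] fun ω => μ₀ ω * (1 - π ω) := by
      have hμ₀1A : Integrable (μ₀ * fun ω => 1 - A ω) P := by
        apply intb _ (C₀ * 2) ((hμ₀meas.mul (measurable_const.sub hA')).aestronglyMeasurable)
        refine .of_forall fun ω => ?_
        rw [Pi.mul_apply, abs_mul]
        have h2 : |1 - A ω| ≤ 2 := by rcases hA01 ω with h | h <;> simp [h] <;> norm_num
        exact mul_le_mul (hμ₀b ω) h2 (abs_nonneg _) (le_trans (abs_nonneg _) (hμ₀b ω))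
      have := condExp_mul_of_stronglyMeasurable_left hμ₀m.stronglyMeasurable (g := fun ω => 1 - A ω) hμ₀1A int1A
      have h1A : P[fun ω => 1 - A ω|m] =ᵐ[P] fun ω => 1 - π ω := by
        have := condExp_sub (μ := P) (m := m) (integrable_const (1 : ℝ)) intA
        have hc : P[fun _ : Ω => (1 : ℝ)|m] = fun _ => (1 : ℝ) := condExp_const hm 1
        filter_upwards [this] with ω e
        simp only [Pi.sub_apply] at e ⊢
        rw [show (fun ω => 1 - A ω) = (fun _ : Ω => (1:ℝ)) - A from rfl]
        rw [e, hc]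
      filter_upwards [this, h1A] with ω e1 e2
      simp only [Pi.mul_apply] at e1 ⊢
      rw [show (fun ω => μ₀ ω * (1 - A ω)) = μ₀ * fun ω => 1 - A ω from rfl]
      rw [e1, e2]
    have h2 : P[g₀|m] =ᵐ[P] P[fun ω => (1 - A ω) * Y ω|m] - P[fun ω => μ₀ ω * (1 - A ω)|m] := by
      have heq : g₀ = (fun ω => (1 - A ω) * Y ω) - fun ω => μ₀ ω * (1 - A ω) := by
        funext ω; simp [hg₀def]; ring
      rw [heq]
      apply condExp_sub
      · apply intb _ (2 * CY) (((measurable_const.sub hA').mul hY').aestronglyMeasurable)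
        refine .of_forall fun ω => ?_
        rw [Pi.mul_apply, abs_mul]
        have h2 : |1 - A ω| ≤ 2 := by rcases hA01 ω with h | h <;> simp [h] <;> norm_num
        exact mul_le_mul h2 (hYb ω) (abs_nonneg _) (by norm_num)
      · apply intb _ (C₀ * 2) ((hμ₀meas.mul (measurable_const.sub hA')).aestronglyMeasurable)
        refine .of_forall fun ω => ?_
        rw [Pi.mul_apply, abs_mul]
        have h2 : |1 - A ω| ≤ 2 := by rcases hA01 ω with h | h <;> simp [h] <;> norm_num
        exact mul_le_mul (hμ₀b ω) h2 (abs_nonneg _) (le_trans (abs_nonneg _) (hμ₀b ω))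
    filter_upwards [h1, h2, hreg0, hπ] with ω e1 e2 e3 e4
    simp only [Pi.sub_apply, Pi.zero_apply] at *
    rw [e2, e1, e3, e4]; ring
  have hcf₁g₁ : P[f₁ * g₁|m] =ᵐ[P] 0 := by
    have := condExp_mul_of_stronglyMeasurable_left hf₁sm intf₁g₁ intg₁
    filter_upwards [this, hcg₁] with ω e1 e2
    simp only [Pi.mul_apply, Pi.zero_apply] at *
    rw [e1, e2, mul_zero]
  have hcf₀g₀ : P[f₀ * g₀|m] =ᵐ[P] 0 := by
    have := condExp_mul_of_stronglyMeasurable_left hf₀sm intf₀g₀ intg₀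
    filter_upwards [this, hcg₀] with ω e1 e2
    simp only [Pi.mul_apply, Pi.zero_apply] at *
    rw [e1, e2, mul_zero]
  have hch₃ : P[h₃|m] =ᵐ[P] fun ω => μ₀ ω * π ω + (1 - μ₁ ω) * (1 - π ω) := by
    have h1 : P[μ₀ * A|m] =ᵐ[P] μ₀ * π := condExp_mul_of_stronglyMeasurable_left hμ₀m.stronglyMeasurable intμ₀A intA
    have h1A : P[fun ω => 1 - A ω|m] =ᵐ[P] fun ω => 1 - π ω := by
      have := condExp_sub (μ := P) (m := m) (integrable_const (1 : ℝ)) intA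
      have hc : P[fun _ : Ω => (1 : ℝ)|m] = fun _ => (1 : ℝ) := condExp_const hm 1
      filter_upwards [this] with ω e
      simp only [Pi.sub_apply] at e ⊢
      rw [show (fun ω => 1 - A ω) = (fun _ : Ω => (1:ℝ)) - A from rfl]
      rw [e, hc]
    have h2 : P[(fun ω => 1 - μ₁ ω) * fun ω => 1 - A ω|m] =ᵐ[P]
        (fun ω => 1 - μ₁ ω) * P[fun ω => 1 - A ω|m] :=
      condExp_mul_of_stronglyMeasurable_left (stronglyMeasurable_const.sub hμ₁m.stronglyMeasurable)
        intμ₁1A int1A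
    have h3 : P[h₃|m] =ᵐ[P] P[μ₀ * A|m] + P[(fun ω => 1 - μ₁ ω) * fun ω => 1 - A ω|m] := by
      have heq : h₃ = μ₀ * A + (fun ω => 1 - μ₁ ω) * fun ω => 1 - A ω := rfl
      rw [heq]; exact condExp_add intμ₀A intμ₁1A m
    filter_upwards [h1, h1A, h2, h3] with ω e1 e2 e3 e4
    simp only [Pi.add_apply, Pi.mul_apply] at *
    rw [e4, e1, e3, e2]
  -- combine
  have hmain : P[τf|m] =ᵐ[P] fun ω => (1 - π₁ ω) * (1 - μ₁ ω) + π₁ ω * μ₀ ω := by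
    have h0 : P[τf|m] =ᵐ[P] P[f₁ * g₁ + f₀ * g₀ + h₃|m] := condExp_congr_ae htt
    have h1 : P[f₁ * g₁ + f₀ * g₀ + h₃|m] =ᵐ[P]
        P[f₁ * g₁ + f₀ * g₀|m] + P[h₃|m] := condExp_add (intf₁g₁.add intf₀g₀) inth₃ m
    have h2 : P[f₁ * g₁ + f₀ * g₀|m] =ᵐ[P] P[f₁ * g₁|m] + P[f₀ * g₀|m] :=
      condExp_add intf₁g₁ intf₀g₀ m
    filter_upwards [h0, h1, h2, hcf₁g₁, hcf₀g₀, hch₃, hπ] with ω e0 e1 e2 e3 e4 e5 e6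
    simp only [Pi.add_apply, Pi.zero_apply] at *
    rw [e0, e1, e2, e3, e4, e5, e6]; ring
  refine ⟨hmain, ?_⟩
  have hint : ∫ ω, (P[τf|m]) ω ∂P = ∫ ω, τf ω ∂P := integral_condExp hm
  rw [← hint]
  exact integral_congr_ae hmain
end

section
/- Let (Ω, ℱ, P) be a probability space and m ⊆ ℱ a sub-σ-algebra. Let A : Ω → {0, 1} be measurable, Y a bounded real random variable, and t ∈ (0, 1/2]. Let π₁ be a version of E[A | m] with t ≤ π₁ ≤ 1 − t almost surely. Let μ₁, μ₀ be bounded m-measurable functions satisfying E[A·Y | m] = μ₁·π₁ a.s. and E[(1 − A)·Y | m] = μ₀·(1 − π₁) a.s. Let π̂₁ be m-measurable with t ≤ π̂₁ ≤ 1 − t a.s., let μ̂₁, μ̂₀ be bounded m-measurable, and define ν̂ = (2A − 1)·(Y − (A·μ̂₁ + (1 − A)·μ̂₀)) / (A·π̂₁ + (1 − A)·(1 − π̂₁)) + μ̂₁ − μ̂₀. Then E[ν̂] − E[μ₁ − μ₀] = E[ (π₁ − π̂₁) · ( (μ₁ − μ̂₁)/π̂₁ + (μ₀ − μ̂₀)/(1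 − π̂₁) ) ]. -/
open MeasureTheory

private lemma int_of_bound {Ω : Type*} {mΩ : MeasurableSpace Ω} (P : Measure Ω)
    [IsFiniteMeasure P] {f : Ω → ℝ} (hf : AEStronglyMeasurable f P) (C : ℝ)
    (h : ∀ᵐ ω ∂P, |f ω| ≤ C) : Integrable f P :=
  (integrable_const C).mono' hf (by simpa [Real.norm_eq_abs] using h)

private lemma pull_out {Ω : Type*} {mΩ : MeasurableSpace Ω} (P : Measure Ω)
    [IsProbabilityMeasure P] {m : MeasurableSpace Ω} (hm : m ≤ mΩ) {f g h : Ω → ℝ}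
    (hg : StronglyMeasurable[m] g) (hf : Integrable f P)
    (hgf : Integrable (fun ω => g ω * f ω) P) (hh : P[f|m] =ᵐ[P] h) :
    ∫ ω, g ω * f ω ∂P = ∫ ω, g ω * h ω ∂P := by
  have h1 : P[g * f|m] =ᵐ[P] g * P[f|m] :=
    condExp_mul_of_stronglyMeasurable_left hg (by exact hgf) hf
  have h2 : ∫ ω, g ω * f ω ∂P = ∫ ω, (P[g * f|m]) ω ∂P := (integral_condExp hm).symm
  rw [h2]
  refine integral_congr_ae ?_
  filter_upwards [h1, hh] with ω hω hω2
  simp only [Pi.mul_apply] at hω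
  rw [hω, hω2]

/-- Doubly robust second-order bias identity: the bias of the augmented
inverse-probability-weighted estimator `ν̂` at estimated nuisances `(π̂₁, μ̂₁, μ̂₀)` is
`E[ν̂] − E[μ₁ − μ₀] = E[(π₁ − π̂₁)·((μ₁ − μ̂₁)/π̂₁ + (μ₀ − μ̂₀)/(1 − π̂₁))]`. -/
theorem doubly_robust_bias_identity
    {Ω : Type*} (m : MeasurableSpace Ω) {mΩ : MeasurableSpace Ω} (P : Measure Ω) [IsProbabilityMeasure P]
    (hm : m ≤ mΩ)
    (A : Ω → ℝ) (hA : Measurable A) (hA01 : ∀ ω, A ω = 0 ∨ A ω = 1)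
    (Y : Ω → ℝ) (hYmeas : Measurable Y) (CY : ℝ) (hYb : ∀ ω, |Y ω| ≤ CY)
    (t : ℝ) (ht : t ∈ Set.Ioc (0 : ℝ) (1 / 2))
    (π₁ : Ω → ℝ) (hπ : π₁ =ᵐ[P] P[A|m])
    (hπb : ∀ᵐ ω ∂P, t ≤ π₁ ω ∧ π₁ ω ≤ 1 - t)
    (μ₁ μ₀ : Ω → ℝ) (hμ₁m : Measurable[m] μ₁) (hμ₀m : Measurable[m] μ₀)
    (C₁ C₀ : ℝ) (hμ₁b : ∀ ω, |μ₁ ω| ≤ C₁) (hμ₀b : ∀ ω, |μ₀ ω| ≤ C₀)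
    (hreg1 : P[fun ω => A ω * Y ω|m] =ᵐ[P] fun ω => μ₁ ω * π₁ ω)
    (hreg0 : P[fun ω => (1 - A ω) * Y ω|m] =ᵐ[P] fun ω => μ₀ ω * (1 - π₁ ω))
    (πhat : Ω → ℝ) (hπhatm : Measurable[m] πhat)
    (hπhatb : ∀ᵐ ω ∂P, t ≤ πhat ω ∧ πhat ω ≤ 1 - t)
    (μ₁hat μ₀hat : Ω → ℝ) (hμ₁hatm : Measurable[m] μ₁hat) (hμ₀hatm : Measurable[m] μ₀hat)
    (C₁' C₀' : ℝ) (hμ₁hatb : ∀ ω, |μ₁hat ω| ≤ C₁') (hμ₀hatb : ∀ ω, |μ₀hat ω| ≤ C₀')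
    (νhat : Ω → ℝ)
    (hνhat : ∀ ω, νhat ω =
      (2 * A ω - 1) * (Y ω - (A ω * μ₁hat ω + (1 - A ω) * μ₀hat ω)) /
        (A ω * πhat ω + (1 - A ω) * (1 - πhat ω)) + μ₁hat ω - μ₀hat ω) :
    (∫ ω, νhat ω ∂P) - ∫ ω, (μ₁ ω - μ₀ ω) ∂P =
      ∫ ω, (π₁ ω - πhat ω) *
        ((μ₁ ω - μ₁hat ω) / πhat ω + (μ₀ ω - μ₀hat ω) / (1 - πhat ω)) ∂P := by
  have ht0 : (0:ℝ) < t := ht.1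
  have hAb : ∀ ω, |A ω| ≤ 1 := by
    intro ω; rcases hA01 ω with h | h <;> simp [h]
  have h1Ab : ∀ ω, |1 - A ω| ≤ 1 := by
    intro ω; rcases hA01 ω with h | h <;> simp [h]
  have hAM : Measurable[mΩ] A := hA
  have hYM : Measurable[mΩ] Y := hYmeas
  have hπhatM : Measurable[mΩ] πhat := hπhatm.mono hm le_rfl
  have hμ₁M : Measurable[mΩ] μ₁ := hμ₁m.mono hm le_rfl
  have hμ₀M : Measurable[mΩ] μ₀ := hμ₀m.mono hm le_rfl
  have hμ₁hM : Measurable[mΩ] μ₁hat := hμ₁hatm.mono hm le_rfl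
  have hμ₀hM : Measurable[mΩ] μ₀hat := hμ₀hatm.mono hm le_rfl
  have aA : AEStronglyMeasurable[mΩ] A P := hAM.aestronglyMeasurable
  have aY : AEStronglyMeasurable[mΩ] Y P := hYM.aestronglyMeasurable
  have aπh : AEStronglyMeasurable[mΩ] πhat P := hπhatM.aestronglyMeasurable
  have aμ₁ : AEStronglyMeasurable[mΩ] μ₁ P := hμ₁M.aestronglyMeasurable
  have aμ₀ : AEStronglyMeasurable[mΩ] μ₀ P := hμ₀M.aestronglyMeasurable
  have aμ₁h : AEStronglyMeasurable[mΩ] μ₁hat P := hμ₁hM.aestronglyMeasurable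
  have aμ₀h : AEStronglyMeasurable[mΩ] μ₀hat P := hμ₀hM.aestronglyMeasurable
  have a1A : AEStronglyMeasurable[mΩ] (fun ω => 1 - A ω) P := aestronglyMeasurable_const.sub aA
  have a1πh : AEStronglyMeasurable[mΩ] (fun ω => 1 - πhat ω) P := aestronglyMeasurable_const.sub aπh
  have hπ₁M : AEStronglyMeasurable[mΩ] π₁ P :=
    (stronglyMeasurable_condExp.mono hm).aestronglyMeasurable.congr hπ.symm
  -- a.e. bounds / nonvanishing
  have haebnd : ∀ᵐ ω ∂P, (t ≤ πhat ω ∧ πhat ω ≤ 1 - t) ∧ t ≤ π₁ ω ∧ π₁ ω ≤ 1 - t :=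
    hπhatb.and hπb
  have hg₁b : ∀ᵐ ω ∂P, |(πhat ω)⁻¹| ≤ t⁻¹ := by
    filter_upwards [haebnd] with ω hω
    rw [abs_inv, abs_of_pos (lt_of_lt_of_le ht0 hω.1.1)]
    exact inv_anti₀ ht0 hω.1.1
  have hg₀b : ∀ᵐ ω ∂P, |(1 - πhat ω)⁻¹| ≤ t⁻¹ := by
    filter_upwards [haebnd] with ω hω
    have h' : t ≤ 1 - πhat ω := by linarith [hω.1.2]
    rw [abs_inv, abs_of_pos (lt_of_lt_of_le ht0 h')]
    exact inv_anti₀ ht0 h'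
  have hπ₁b : ∀ᵐ ω ∂P, |π₁ ω| ≤ 1 := by
    filter_upwards [haebnd] with ω hω
    rw [abs_le]; constructor <;> nlinarith [hω.2.1, hω.2.2]
  have h1π₁b : ∀ᵐ ω ∂P, |1 - π₁ ω| ≤ 1 := by
    filter_upwards [haebnd] with ω hω
    rw [abs_le]; constructor <;> nlinarith [hω.2.1, hω.2.2]
  -- basic integrabilities
  have hintA : Integrable A P := int_of_bound P aA 1 (.of_forall hAb)
  have hboundmul : ∀ (u v : Ω → ℝ) (cu cv : ℝ), (∀ ω, |u ω| ≤ cu) → (∀ ω, |v ω| ≤ cv) →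
      ∀ ω, |u ω * v ω| ≤ cu * cv := by
    intro u v cu cv hu hv ω
    rw [abs_mul]
    exact mul_le_mul (hu ω) (hv ω) (abs_nonneg _) ((abs_nonneg _).trans (hu ω))
  have hintAY : Integrable (fun ω => A ω * Y ω) P :=
    int_of_bound P (aA.mul aY) (1 * CY)
      (.of_forall (hboundmul A Y 1 CY hAb hYb))
  have hintA1Y : Integrable (fun ω => (1 - A ω) * Y ω) P :=
    int_of_bound P (a1A.mul aY) (1 * CY)
      (.of_forall (hboundmul _ Y 1 CY h1Ab hYb))
  have hintμ₁hA : Integrable (fun ω => μ₁hat ω * A ω) P :=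
    int_of_bound P (aμ₁h.mul aA) (C₁' * 1)
      (.of_forall (hboundmul μ₁hat A C₁' 1 hμ₁hatb hAb))
  have hintμ₀hA : Integrable (fun ω => μ₀hat ω * (1 - A ω)) P :=
    int_of_bound P (aμ₀h.mul a1A) (C₀' * 1)
      (.of_forall (hboundmul μ₀hat _ C₀' 1 hμ₀hatb h1Ab))
  -- f₁ = A (Y - μ̂₁), f₀ = (1-A)(Y - μ̂₀)
  set f₁ : Ω → ℝ := fun ω => A ω * (Y ω - μ₁hat ω) with hf₁def
  set f₀ : Ω → ℝ := fun ω => (1 - A ω) * (Y ω - μ₀hat ω) with hf₀def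
  have hf₁eq : f₁ = (fun ω => A ω * Y ω) - fun ω => μ₁hat ω * A ω := by
    funext ω; simp only [hf₁def, Pi.sub_apply]; ring
  have hf₀eq : f₀ = (fun ω => (1 - A ω) * Y ω) - fun ω => μ₀hat ω * (1 - A ω) := by
    funext ω; simp only [hf₀def, Pi.sub_apply]; ring
  have hintf₁ : Integrable f₁ P := by rw [hf₁eq]; exact hintAY.sub hintμ₁hA
  have hintf₀ : Integrable f₀ P := by rw [hf₀eq]; exact hintA1Y.sub hintμ₀hA
  have hf₁b : ∀ ω, |f₁ ω| ≤ 1 * (CY + C₁') :=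
    hboundmul A _ 1 (CY + C₁') hAb
      (fun ω => (abs_sub _ _).trans (add_le_add (hYb ω) (hμ₁hatb ω)))
  have hf₀b : ∀ ω, |f₀ ω| ≤ 1 * (CY + C₀') :=
    hboundmul _ _ 1 (CY + C₀') h1Ab
      (fun ω => (abs_sub _ _).trans (add_le_add (hYb ω) (hμ₀hatb ω)))
  -- conditional expectations
  have hcA : P[A|m] =ᵐ[P] π₁ := hπ.symm
  have hcμ₁hA : P[fun ω => μ₁hat ω * A ω|m] =ᵐ[P] fun ω => μ₁hat ω * π₁ ω := by
    have h1 := condExp_mul_of_stronglyMeasurable_left (μ := P) hμ₁hatm.stronglyMeasurable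
      (g := A) (by exact hintμ₁hA) hintA
    refine h1.trans ?_
    filter_upwards [hcA] with ω hω
    simp only [Pi.mul_apply, hω]
  have hc1A : P[fun ω => 1 - A ω|m] =ᵐ[P] fun ω => 1 - π₁ ω := by
    have h1 : P[(fun _ => (1:ℝ)) - A|m] =ᵐ[P] P[fun _ => (1:ℝ)|m] - P[A|m] :=
      condExp_sub (integrable_const 1) hintA m
    have h2 : P[fun _ => (1:ℝ)|m] = fun _ => (1:ℝ) := condExp_const hm 1
    have h0 : (fun ω => 1 - A ω) = (fun _ => (1:ℝ)) - A := rfl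
    rw [h0]
    refine h1.trans ?_
    filter_upwards [hcA] with ω hω
    simp only [Pi.sub_apply, h2, hω]
  have hcμ₀hA : P[fun ω => μ₀hat ω * (1 - A ω)|m] =ᵐ[P] fun ω => μ₀hat ω * (1 - π₁ ω) := by
    have hint1A : Integrable (fun ω => 1 - A ω) P := (integrable_const 1).sub hintA
    have h1 := condExp_mul_of_stronglyMeasurable_left (μ := P) hμ₀hatm.stronglyMeasurable
      (g := fun ω => 1 - A ω) (by exact hintμ₀hA) hint1A
    refine h1.trans ?_
    filter_upwards [hc1A] with ω hω
    simp only [Pi.mul_apply, hω]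
  have hcf₁ : P[f₁|m] =ᵐ[P] fun ω => (μ₁ ω - μ₁hat ω) * π₁ ω := by
    rw [hf₁eq]
    refine (condExp_sub hintAY hintμ₁hA m).trans ?_
    filter_upwards [hreg1, hcμ₁hA] with ω h1 h2
    simp only [Pi.sub_apply, h1, h2]; ring
  have hcf₀ : P[f₀|m] =ᵐ[P] fun ω => (μ₀ ω - μ₀hat ω) * (1 - π₁ ω) := by
    rw [hf₀eq]
    refine (condExp_sub hintA1Y hintμ₀hA m).trans ?_
    filter_upwards [hreg0, hcμ₀hA] with ω h1 h2
    simp only [Pi.sub_apply, h1, h2]; ring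
  -- g₁, g₀ and integrabilities of products
  set g₁ : Ω → ℝ := fun ω => (πhat ω)⁻¹ with hg₁def
  set g₀ : Ω → ℝ := fun ω => (1 - πhat ω)⁻¹ with hg₀def
  have hg₁m : StronglyMeasurable[m] g₁ := hπhatm.inv.stronglyMeasurable
  have hg₀m : StronglyMeasurable[m] g₀ := (measurable_const.sub hπhatm).inv.stronglyMeasurable
  have ag₁ : AEStronglyMeasurable[mΩ] g₁ P := (hπhatM.inv).aestronglyMeasurable
  have ag₀ : AEStronglyMeasurable[mΩ] g₀ P := ((measurable_const.sub hπhatM).inv).aestronglyMeasurable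
  have hI1 : Integrable (fun ω => g₁ ω * f₁ ω) P := by
    refine int_of_bound P (ag₁.mul hintf₁.aestronglyMeasurable) (t⁻¹ * (1 * (CY + C₁'))) ?_
    filter_upwards [hg₁b] with ω hω
    rw [abs_mul]
    exact mul_le_mul hω (hf₁b ω) (abs_nonneg _) ((abs_nonneg _).trans hω)
  have hI0 : Integrable (fun ω => g₀ ω * f₀ ω) P := by
    refine int_of_bound P (ag₀.mul hintf₀.aestronglyMeasurable) (t⁻¹ * (1 * (CY + C₀'))) ?_
    filter_upwards [hg₀b] with ω hω
    rw [abs_mul]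
    exact mul_le_mul hω (hf₀b ω) (abs_nonneg _) ((abs_nonneg _).trans hω)
  have hJ1 : Integrable (fun ω => g₁ ω * ((μ₁ ω - μ₁hat ω) * π₁ ω)) P := by
    refine int_of_bound P (ag₁.mul ((aμ₁.sub aμ₁h).mul hπ₁M)) (t⁻¹ * ((C₁ + C₁') * 1)) ?_
    filter_upwards [hg₁b, hπ₁b] with ω hω hω2
    rw [abs_mul, abs_mul]
    have hd : |μ₁ ω - μ₁hat ω| ≤ C₁ + C₁' :=
      (abs_sub _ _).trans (add_le_add (hμ₁b ω) (hμ₁hatb ω))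
    refine mul_le_mul hω (mul_le_mul hd hω2 (abs_nonneg _)
      ((abs_nonneg _).trans hd)) (mul_nonneg (abs_nonneg _) (abs_nonneg _))
      ((abs_nonneg _).trans hω)
  have hJ0 : Integrable (fun ω => g₀ ω * ((μ₀ ω - μ₀hat ω) * (1 - π₁ ω))) P := by
    refine int_of_bound P (ag₀.mul ((aμ₀.sub aμ₀h).mul (aestronglyMeasurable_const.sub hπ₁M))) (t⁻¹ * ((C₀ + C₀') * 1)) ?_
    filter_upwards [hg₀b, h1π₁b] with ω hω hω2
    rw [abs_mul, abs_mul]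
    have hd : |μ₀ ω - μ₀hat ω| ≤ C₀ + C₀' :=
      (abs_sub _ _).trans (add_le_add (hμ₀b ω) (hμ₀hatb ω))
    refine mul_le_mul hω (mul_le_mul hd hω2 (abs_nonneg _)
      ((abs_nonneg _).trans hd)) (mul_nonneg (abs_nonneg _) (abs_nonneg _))
      ((abs_nonneg _).trans hω)
  have hIμh : Integrable (fun ω => μ₁hat ω - μ₀hat ω) P := by
    refine int_of_bound P (aμ₁h.sub aμ₀h) (C₁' + C₀')
      (.of_forall fun ω => (abs_sub _ _).trans (add_le_add (hμ₁hatb ω) (hμ₀hatb ω)))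
  -- νhat =ᵐ g₁ f₁ - g₀ f₀ + (μ̂₁ - μ̂₀)
  have hν : νhat =ᵐ[P] fun ω => g₁ ω * f₁ ω - g₀ ω * f₀ ω + (μ₁hat ω - μ₀hat ω) := by
    filter_upwards [haebnd] with ω hω
    have hp0 : πhat ω ≠ 0 := (lt_of_lt_of_le ht0 hω.1.1).ne'
    have hp1 : 1 - πhat ω ≠ 0 := by
      have : t ≤ 1 - πhat ω := by linarith [hω.1.2]
      exact (lt_of_lt_of_le ht0 this).ne'
    rw [hνhat ω]
    rcases hA01 ω with h | h <;>
      simp only [hg₁def, hg₀def, hf₁def, hf₀def, h] <;> norm_num <;> field_simp <;> ring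
  -- Putting it together
  have hstep1 : ∫ ω, νhat ω ∂P =
      (∫ ω, g₁ ω * f₁ ω ∂P) - (∫ ω, g₀ ω * f₀ ω ∂P) + ∫ ω, (μ₁hat ω - μ₀hat ω) ∂P := by
    have hI10 : Integrable (fun ω => g₁ ω * f₁ ω - g₀ ω * f₀ ω) P := hI1.sub hI0
    rw [integral_congr_ae hν, integral_add hI10 hIμh, integral_sub hI1 hI0]
  have hstep2 : ∫ ω, g₁ ω * f₁ ω ∂P = ∫ ω, g₁ ω * ((μ₁ ω - μ₁hat ω) * π₁ ω) ∂P :=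
    pull_out P hm hg₁m hintf₁ hI1 hcf₁
  have hstep3 : ∫ ω, g₀ ω * f₀ ω ∂P = ∫ ω, g₀ ω * ((μ₀ ω - μ₀hat ω) * (1 - π₁ ω)) ∂P :=
    pull_out P hm hg₀m hintf₀ hI0 hcf₀
  have hIμ : Integrable (fun ω => μ₁ ω - μ₀ ω) P := by
    refine int_of_bound P (aμ₁.sub aμ₀) (C₁ + C₀)
      (.of_forall fun ω => (abs_sub _ _).trans (add_le_add (hμ₁b ω) (hμ₀b ω)))
  have hJ10 : Integrable (fun ω => g₁ ω * ((μ₁ ω - μ₁hat ω) * π₁ ω) -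
      g₀ ω * ((μ₀ ω - μ₀hat ω) * (1 - π₁ ω))) P := hJ1.sub hJ0
  have hJA : Integrable (fun ω => g₁ ω * ((μ₁ ω - μ₁hat ω) * π₁ ω) -
      g₀ ω * ((μ₀ ω - μ₀hat ω) * (1 - π₁ ω)) + (μ₁hat ω - μ₀hat ω)) P := hJ10.add hIμh
  have hcomb : ∫ ω, (g₁ ω * ((μ₁ ω - μ₁hat ω) * π₁ ω) -
      g₀ ω * ((μ₀ ω - μ₀hat ω) * (1 - π₁ ω)) + (μ₁hat ω - μ₀hat ω) - (μ₁ ω - μ₀ ω)) ∂P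
      = (∫ ω, g₁ ω * ((μ₁ ω - μ₁hat ω) * π₁ ω) ∂P) -
        (∫ ω, g₀ ω * ((μ₀ ω - μ₀hat ω) * (1 - π₁ ω)) ∂P) +
        (∫ ω, (μ₁hat ω - μ₀hat ω) ∂P) - ∫ ω, (μ₁ ω - μ₀ ω) ∂P := by
    rw [integral_sub hJA hIμ, integral_add hJ10 hIμh, integral_sub hJ1 hJ0]
  rw [hstep1, hstep2, hstep3, ← hcomb]
  refine integral_congr_ae ?_
  filter_upwards [haebnd] with ω hω
  have hp0 : πhat ω ≠ 0 := (lt_of_lt_of_le ht0 hω.1.1).ne'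
  have hp1 : 1 - πhat ω ≠ 0 := by
    have : t ≤ 1 - πhat ω := by linarith [hω.1.2]
    exact (lt_of_lt_of_le ht0 this).ne'
  simp only [hg₁def, hg₀def]
  field_simp
  ring
end
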